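/- arXiv:1411.6398 — 8 statements merged into one kernel-verified Lean document; each statement's English description precedes it below -/
import Mathlib

section
/- Uniqueness of minimal dilations: Let S be a *-semigroup, V a complex Hilbert space, and φ : S → B(V) a positive definite function. If (π₁, H₁, ι₁) and (π₂, H₂, ι₂) are two minimal dilations of φ, then there exists a unique unitary operator U : H₁ → H₂ such that U π₁(s) = π₂(s) U for all s ∈ S and U ∘ ι₁ = ι₂. -/
/- STATEMENT 2: Uniqueness of minimal dilations.
If `(π₁, H₁, ι₁)` and `(π₂, H₂, ι₂)` are minimal dilations of the positive definite
function `φ : S → B(V)`, then there is a unique unitary `U : H₁ → H₂`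
(a `LinearIsometryEquiv`) with `U π₁(s) = π₂(s) U` and `U ∘ ι₁ = ι₂`. -/

open scoped ComplexOrder

noncomputable section

universe u v w x

theorem uniqueness_of_minimal_dilations
    {S : Type u} [Semigroup S] [StarMul S]
    {V : Type v} [NormedAddCommGroup V] [InnerProductSpace ℂ V] [CompleteSpace V]
    (φ : S → (V →L[ℂ] V))
    -- φ is positive definite:
    (hpd : ∀ (n : ℕ) (s : Fin n → S) (v : Fin n → V),
      0 ≤ ∑ j, ∑ k, (inner ℂ (v j) (φ (star (s j) * s k) (v k)) : ℂ))
    {H₁ : Type w} [NormedAddCommGroup H₁] [InnerProductSpace ℂ H₁] [CompleteSpace H₁]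
    {H₂ : Type x} [NormedAddCommGroup H₂] [InnerProductSpace ℂ H₂] [CompleteSpace H₂]
    (π₁ : S → (H₁ →L[ℂ] H₁)) (ι₁ : V →L[ℂ] H₁)
    (π₂ : S → (H₂ →L[ℂ] H₂)) (ι₂ : V →L[ℂ] H₂)
    -- (π₁, H₁, ι₁) is a minimal dilation of φ:
    (h₁_mul : ∀ s t : S, π₁ (s * t) = (π₁ s).comp (π₁ t))
    (h₁_star : ∀ s : S, π₁ (star s) = ContinuousLinearMap.adjoint (π₁ s))
    (h₁_dil : ∀ s : S, φ s = (ContinuousLinearMap.adjoint ι₁).comp ((π₁ s).comp ι₁))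
    (h₁_min : Dense (Submodule.span ℂ {x : H₁ | ∃ (s : S) (v : V), π₁ s (ι₁ v) = x} : Set H₁))
    -- (π₂, H₂, ι₂) is a minimal dilation of φ:
    (h₂_mul : ∀ s t : S, π₂ (s * t) = (π₂ s).comp (π₂ t))
    (h₂_star : ∀ s : S, π₂ (star s) = ContinuousLinearMap.adjoint (π₂ s))
    (h₂_dil : ∀ s : S, φ s = (ContinuousLinearMap.adjoint ι₂).comp ((π₂ s).comp ι₂))
    (h₂_min : Dense (Submodule.span ℂ {x : H₂ | ∃ (s : S) (v : V), π₂ s (ι₂ v) = x} : Set H₂)) :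
    -- then there is a unique unitary U intertwining π₁ with π₂ and with U ∘ ι₁ = ι₂:
    ∃! U : H₁ ≃ₗᵢ[ℂ] H₂,
      (∀ (s : S) (x : H₁), U (π₁ s x) = π₂ s (U x)) ∧ (∀ v : V, U (ι₁ v) = ι₂ v) := by
  classical
  set D₁ : Set H₁ := {x : H₁ | ∃ (s : S) (v : V), π₁ s (ι₁ v) = x} with hD₁
  set D₂ : Set H₂ := {x : H₂ | ∃ (s : S) (v : V), π₂ s (ι₂ v) = x} with hD₂
  -- key inner product identities
  have key₁ : ∀ (s t : S) (v w : V),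
      (inner ℂ (π₁ s (ι₁ v)) (π₁ t (ι₁ w)) : ℂ) = inner ℂ v (φ (star s * t) w) := by
    intro s t v w
    have h1 : (inner ℂ (π₁ s (ι₁ v)) (π₁ t (ι₁ w)) : ℂ)
        = inner ℂ (ι₁ v) (π₁ (star s) (π₁ t (ι₁ w))) := by
      rw [h₁_star s, ContinuousLinearMap.adjoint_inner_right]
    rw [h1, ← ContinuousLinearMap.comp_apply, ← h₁_mul, h₁_dil (star s * t)]
    simp [ContinuousLinearMap.adjoint_inner_right]
  have key₂ : ∀ (s t : S) (v w : V),
      (inner ℂ (π₂ s (ι₂ v)) (π₂ t (ι₂ w)) : ℂ) = inner ℂ v (φ (star s * t) w) := by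
    intro s t v w
    have h1 : (inner ℂ (π₂ s (ι₂ v)) (π₂ t (ι₂ w)) : ℂ)
        = inner ℂ (ι₂ v) (π₂ (star s) (π₂ t (ι₂ w))) := by
      rw [h₂_star s, ContinuousLinearMap.adjoint_inner_right]
    rw [h1, ← ContinuousLinearMap.comp_apply, ← h₂_mul, h₂_dil (star s * t)]
    simp [ContinuousLinearMap.adjoint_inner_right]
  have keyι₁ : ∀ (s : S) (v w : V),
      (inner ℂ (ι₁ v) (π₁ s (ι₁ w)) : ℂ) = inner ℂ v (φ s w) := by
    intro s v w
    rw [h₁_dil s]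
    simp [ContinuousLinearMap.adjoint_inner_right]
  have keyι₂ : ∀ (s : S) (v w : V),
      (inner ℂ (ι₂ v) (π₂ s (ι₂ w)) : ℂ) = inner ℂ v (φ s w) := by
    intro s v w
    rw [h₂_dil s]
    simp [ContinuousLinearMap.adjoint_inner_right]
  -- the graph submodule
  set Gset : Set (H₁ × H₂) := {p | ∃ (s : S) (v : V), p = (π₁ s (ι₁ v), π₂ s (ι₂ v))} with hGset
  set G : Submodule ℂ (H₁ × H₂) := Submodule.span ℂ Gset with hG
  have hinner : ∀ p ∈ G, ∀ q ∈ G, (inner ℂ p.1 q.1 : ℂ) = inner ℂ p.2 q.2 := by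
    intro p hp q hq
    induction hp, hq using Submodule.span_induction₂ with
    | mem_mem p q hp hq =>
      obtain ⟨s, v, rfl⟩ := hp
      obtain ⟨t, w, rfl⟩ := hq
      simp only
      rw [key₁, key₂]
    | zero_left q hq => simp
    | zero_right p hp => simp
    | add_left p p' q hp hp' hq h1 h2 => simp [inner_add_left, h1, h2]
    | add_right p q q' hp hq hq' h1 h2 => simp [inner_add_right, h1, h2]
    | smul_left c p q hp hq h1 => simp [inner_smul_left, h1]
    | smul_right c p q hp hq h1 => simp [inner_smul_right, h1]
  have hnormG : ∀ p ∈ G, ‖p.1‖ = ‖p.2‖ := by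
    intro p hp
    have h := hinner p hp p hp
    rw [@norm_eq_sqrt_re_inner ℂ H₁ _ _ _ p.1, @norm_eq_sqrt_re_inner ℂ H₂ _ _ _ p.2, h]
  set M₁ : Submodule ℂ H₁ := Submodule.span ℂ D₁ with hM₁
  have hex : ∀ x ∈ M₁, ∃ y : H₂, (x, y) ∈ G := by
    intro x hx
    induction hx using Submodule.span_induction with
    | mem x hxD =>
      obtain ⟨s, v, rfl⟩ := hxD
      exact ⟨π₂ s (ι₂ v), Submodule.subset_span ⟨s, v, rfl⟩⟩
    | zero => exact ⟨0, Submodule.zero_mem _⟩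
    | add x y hx hy ihx ihy =>
      obtain ⟨a, ha⟩ := ihx; obtain ⟨b, hb⟩ := ihy
      exact ⟨a + b, by simpa [Prod.mk_add_mk] using Submodule.add_mem _ ha hb⟩
    | smul c x hx ihx =>
      obtain ⟨a, ha⟩ := ihx
      exact ⟨c • a, by simpa [Prod.smul_mk] using Submodule.smul_mem _ c ha⟩
  have huniq : ∀ (x : H₁) (y y' : H₂), (x, y) ∈ G → (x, y') ∈ G → y = y' := by
    intro x y y' h h'
    have hsub : ((0 : H₁), y - y') ∈ G := by
      have := Submodule.sub_mem _ h h'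
      simpa [Prod.mk_sub_mk] using this
    have h0 := (hinner _ hsub _ hsub).symm
    simp only [inner_zero_left] at h0
    exact sub_eq_zero.mp (inner_self_eq_zero.mp h0)
  -- the linear isometry on M₁
  choose yfun hyfun using hex
  let f0 : M₁ → H₂ := fun x => yfun x.1 x.2
  have hf0 : ∀ x : M₁, ((x : H₁), f0 x) ∈ G := fun x => hyfun x.1 x.2
  have f0_add : ∀ x y : M₁, f0 (x + y) = f0 x + f0 y := by
    intro x y
    refine huniq ((x : H₁) + (y : H₁)) _ _ ?_ ?_
    · simpa using hf0 (x + y)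
    · simpa [Prod.mk_add_mk] using Submodule.add_mem _ (hf0 x) (hf0 y)
  have f0_smul : ∀ (c : ℂ) (x : M₁), f0 (c • x) = c • f0 x := by
    intro c x
    refine huniq (c • (x : H₁)) _ _ ?_ ?_
    · simpa using hf0 (c • x)
    · simpa [Prod.smul_mk] using Submodule.smul_mem _ c (hf0 x)
  have f0_norm : ∀ x : M₁, ‖f0 x‖ = ‖x‖ := by
    intro x
    have := hnormG _ (hf0 x)
    simpa using this.symm
  let fIso : M₁ →ₗᵢ[ℂ] H₂ :=
    { toFun := f0
      map_add' := f0_add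
      map_smul' := f0_smul
      norm_map' := f0_norm }
  let fL : M₁ →L[ℂ] H₂ := fIso.toContinuousLinearMap
  let e : M₁ →L[ℂ] H₁ := M₁.subtypeL
  have h_ui : IsUniformInducing (e : M₁ → H₁) := by
    have : Isometry (e : M₁ → H₁) := fun a b => rfl
    exact this.isUniformInducing
  have h_dense : DenseRange (e : M₁ → H₁) := by
    have hr : Set.range (e : M₁ → H₁) = (M₁ : Set H₁) := Subtype.range_val
    rw [DenseRange, hr]
    exact h₁_min
  let g : H₁ →L[ℂ] H₂ := fL.extend e
  have g_eq : ∀ x : M₁, g (x : H₁) = f0 x := fun x =>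
    ContinuousLinearMap.extend_eq fL h_dense h_ui x
  have g_gen : ∀ (s : S) (v : V), g (π₁ s (ι₁ v)) = π₂ s (ι₂ v) := by
    intro s v
    have hmem : π₁ s (ι₁ v) ∈ M₁ := Submodule.subset_span ⟨s, v, rfl⟩
    have h1 : g (π₁ s (ι₁ v)) = f0 ⟨_, hmem⟩ := g_eq ⟨_, hmem⟩
    rw [h1]
    exact huniq (π₁ s (ι₁ v)) _ _ (hf0 ⟨_, hmem⟩) (Submodule.subset_span ⟨s, v, rfl⟩)
  have g_norm : ∀ x : H₁, ‖g x‖ = ‖x‖ := by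
    have heq : (fun x : H₁ => ‖g x‖) = fun x : H₁ => ‖x‖ := by
      refine Continuous.ext_on h₁_min (by fun_prop) (by fun_prop) ?_
      intro x hx
      have := g_eq ⟨x, hx⟩
      simp only [this]
      exact f0_norm ⟨x, hx⟩
    exact fun x => congrFun heq x
  let gIso : H₁ →ₗᵢ[ℂ] H₂ := ⟨g.toLinearMap, g_norm⟩
  have g_surj : Function.Surjective gIso := by
    have hclosed : IsClosed (Set.range (gIso : H₁ → H₂)) :=
      gIso.isometry.isClosedEmbedding.isClosed_range
    have hsub : (Submodule.span ℂ D₂ : Set H₂) ⊆ Set.range (gIso : H₁ → H₂) := by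
      have : Submodule.span ℂ D₂ ≤ LinearMap.range gIso.toLinearMap := by
        rw [Submodule.span_le]
        rintro y ⟨s, v, rfl⟩
        exact ⟨π₁ s (ι₁ v), g_gen s v⟩
      intro y hy
      exact this hy
    intro y
    have : y ∈ closure (Submodule.span ℂ D₂ : Set H₂) := h₂_min y
    have : y ∈ closure (Set.range (gIso : H₁ → H₂)) := closure_mono hsub this
    rwa [hclosed.closure_eq] at this
  let U : H₁ ≃ₗᵢ[ℂ] H₂ := LinearIsometryEquiv.ofSurjective gIso g_surj
  have U_app : ∀ x : H₁, U x = g x := by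
    intro x
    rw [LinearIsometryEquiv.coe_ofSurjective]
    rfl
  have U_gen : ∀ (s : S) (v : V), U (π₁ s (ι₁ v)) = π₂ s (ι₂ v) := by
    intro s v; rw [U_app]; exact g_gen s v
  -- property: U ∘ ι₁ = ι₂
  have U_iota : ∀ v : V, U (ι₁ v) = ι₂ v := by
    intro v
    set z : H₂ := U (ι₁ v) - ι₂ v with hz
    have hz0 : ∀ y ∈ Submodule.span ℂ D₂, (inner ℂ z y : ℂ) = 0 := by
      intro y hy
      induction hy using Submodule.span_induction with
      | mem y hyD =>
        obtain ⟨s, w, rfl⟩ := hyD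
        rw [hz, inner_sub_left]
        have h1 : (inner ℂ (U (ι₁ v)) (π₂ s (ι₂ w)) : ℂ) = inner ℂ (ι₁ v) (π₁ s (ι₁ w)) := by
          rw [← U_gen s w, LinearIsometryEquiv.inner_map_map]
        rw [h1, keyι₁, keyι₂]
        ring
      | zero => simp
      | add y₁ y₂ hy₁ hy₂ ih₁ ih₂ => rw [inner_add_right, ih₁, ih₂, add_zero]
      | smul c y hy ih => rw [inner_smul_right, ih, mul_zero]
    have hz_all : ∀ y : H₂, (inner ℂ z y : ℂ) = 0 := by
      have heq : (fun y : H₂ => (inner ℂ z y : ℂ)) = fun _ : H₂ => (0 : ℂ) := by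
        refine Continuous.ext_on h₂_min (continuous_const.inner continuous_id) continuous_const ?_
        intro y hy
        exact hz0 y hy
      exact fun y => congrFun heq y
    have : z = 0 := inner_self_eq_zero.mp (hz_all z)
    exact sub_eq_zero.mp this
  -- property: intertwining
  have U_intertwine : ∀ (s : S) (x : H₁), U (π₁ s x) = π₂ s (U x) := by
    intro s
    have heq : (fun x : H₁ => U (π₁ s x)) = fun x : H₁ => π₂ s (U x) := by
      refine Continuous.ext_on h₁_min
        ((U.continuous).comp (π₁ s).continuous)
        ((π₂ s).continuous.comp U.continuous) ?_
      intro x hx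
      induction hx using Submodule.span_induction with
      | mem x hxD =>
        obtain ⟨t, w, rfl⟩ := hxD
        have h1 : π₁ s (π₁ t (ι₁ w)) = π₁ (s * t) (ι₁ w) := by
          rw [h₁_mul]; rfl
        have h2 : π₂ s (π₂ t (ι₂ w)) = π₂ (s * t) (ι₂ w) := by
          rw [h₂_mul]; rfl
        simp only [h1, U_gen, h2]
      | zero => simp
      | add x y hx hy ihx ihy => simp only [map_add, ihx, ihy]
      | smul c x hx ih => simp only [map_smul, ih]
    exact fun x => congrFun heq x
  refine ⟨U, ⟨U_intertwine, U_iota⟩, ?_⟩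
  -- uniqueness
  rintro U' ⟨hU'_int, hU'_iota⟩
  have heq : (fun x : H₁ => U' x) = fun x : H₁ => U x := by
    refine Continuous.ext_on h₁_min U'.continuous U.continuous ?_
    intro x hx
    induction hx using Submodule.span_induction with
    | mem x hxD =>
      obtain ⟨s, v, rfl⟩ := hxD
      show U' (π₁ s (ι₁ v)) = U (π₁ s (ι₁ v))
      rw [hU'_int, hU'_iota, U_gen]
    | zero => simp
    | add x y hx hy ihx ihy => simp only [map_add, ihx, ihy]
    | smul c x hx ih => simp only [map_smul, ih]
  exact LinearIsometryEquiv.ext fun x => congrFun heq x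
end
end

section
/- Let S be a *-semigroup possessing a zero element 0, i.e. 0·s = s·0 = 0 for all s ∈ S, let α be an absolute value on S, let V be a complex Hilbert space, and let φ : S → B(V) be an α-bounded positive definite function. Then the function s ↦ φ(s) − φ(0) is also positive definite. -/
/- STATEMENT 3: If `S` is a *-semigroup with a zero element `z` (z·s = s·z = z),
`α` an absolute value and `φ : S → B(V)` an α-bounded positive definite function,
then `s ↦ φ(s) − φ(z)` is positive definite. -/

open scoped ComplexOrder

noncomputable section

universe u v

theorem pd_minus_value_at_zero
    {S : Type u} [Semigroup S] [StarMul S]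
    (z : S) (hz : ∀ s : S, z * s = z ∧ s * z = z)
    {V : Type v} [NormedAddCommGroup V] [InnerProductSpace ℂ V] [CompleteSpace V]
    -- α is an absolute value on S:
    (α : S → ℝ)
    (hα_nonneg : ∀ s, 0 ≤ α s)
    (hα_star : ∀ s, α (star s) = α s)
    (hα_mul : ∀ s t, α (s * t) ≤ α s * α t)
    (φ : S → (V →L[ℂ] V))
    -- φ is positive definite:
    (hpd : ∀ (n : ℕ) (s : Fin n → S) (v : Fin n → V),
      0 ≤ ∑ j, ∑ k, (inner ℂ (v j) (φ (star (s j) * s k) (v k)) : ℂ))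
    -- φ is α-bounded: φ(s* t* t s) ≤ α(t)² φ(s* s) as operators:
    (hαbdd : ∀ s t : S,
      (((α t ^ 2 : ℝ) : ℂ) • φ (star s * s)
        - φ (star s * star t * t * s)).IsPositive) :
    -- then φ − φ(z) is positive definite:
    ∀ (n : ℕ) (s : Fin n → S) (v : Fin n → V),
      0 ≤ ∑ j, ∑ k, (inner ℂ (v j) ((φ (star (s j) * s k) - φ z) (v k)) : ℂ) := by
  intro n s v
  have hzl : ∀ t : S, z * t = z := fun t => (hz t).1
  have hzr : ∀ t : S, t * z = z := fun t => (hz t).2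
  have hzz : star z = z := by
    calc star z = star (z * star z) := by rw [hzl]
      _ = z * star z := by rw [star_mul, star_star]
      _ = z := hzl _
  have key := hpd (n+1) (Fin.snoc s z) (Fin.snoc v (-∑ j, v j))
  simp only [Fin.sum_univ_castSucc, Fin.snoc_castSucc, Fin.snoc_last] at key
  simp only [hzz, hzl, hzr, map_neg, inner_neg_left, inner_neg_right, neg_neg,
    map_sum, inner_sum, sum_inner, Finset.sum_add_distrib, Finset.sum_neg_distrib] at key
  simp only [ContinuousLinearMap.sub_apply, inner_sub_right, Finset.sum_sub_distrib]
  convert key using 1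
  ring_nf
end
end

section
/- If π : S → B(H) is a *-representation of a *-semigroup S on a complex Hilbert space H with sup_{s ∈ S} ‖π(s)‖ < ∞, then in fact ‖π(s)‖ ≤ 1 for every s ∈ S. -/
/- STATEMENT 4: A uniformly bounded *-representation of a *-semigroup on a complex
Hilbert space consists of contractions: if `sup_s ‖π(s)‖ < ∞` then `‖π(s)‖ ≤ 1`
for every `s`. -/

noncomputable section

universe u v

theorem bounded_star_representation_is_contractive
    {S : Type u} [Semigroup S] [StarMul S]
    {H : Type v} [NormedAddCommGroup H] [InnerProductSpace ℂ H] [CompleteSpace H]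
    (π : S → (H →L[ℂ] H))
    (hmul : ∀ s t : S, π (s * t) = (π s).comp (π t))
    (hstar : ∀ s : S, π (star s) = ContinuousLinearMap.adjoint (π s))
    (hbdd : ∃ M : ℝ, ∀ s : S, ‖π s‖ ≤ M) :
    ∀ s : S, ‖π s‖ ≤ 1 := by
  obtain ⟨M, hM⟩ := hbdd
  intro s
  set a : S := star s * s with ha
  set T : H →L[ℂ] H := π a with hT
  have hTsa : IsSelfAdjoint T := by
    have : star a = a := by simp [ha, mul_assoc, star_mul]
    have h2 := hstar a
    rw [this] at h2
    exact (ContinuousLinearMap.star_eq_adjoint T).trans h2.symm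
  -- iterated squares
  let b : ℕ → S := fun n => Nat.rec a (fun _ x => x * x) n
  have hb : ∀ n, π (b n) = T ^ (2 ^ n) := by
    intro n
    induction n with
    | zero => simp [b, hT]
    | succ n ih =>
        have : b (n + 1) = b n * b n := rfl
        rw [this, hmul, ih]
        rw [pow_succ, pow_mul]
        rfl
  have hTn : ∀ n : ℕ, ‖T‖ ^ (2 ^ n) ≤ M := by
    intro n
    have h1 : ‖T ^ (2 ^ n)‖ = ‖T‖ ^ (2 ^ n) := by
      have h0 := hTsa.nnnorm_pow_two_pow n
      have h0' := congrArg (fun x : NNReal => (x : ℝ)) h0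
      simpa using h0'
    have := hM (b n)
    rw [hb n, h1] at this
    exact this
  have hT1 : ‖T‖ ≤ 1 := by
    by_contra h
    push_neg at h
    obtain ⟨n, hn⟩ := pow_unbounded_of_one_lt M h
    have h2 : ‖T‖ ^ n ≤ ‖T‖ ^ (2 ^ n) :=
      pow_le_pow_right₀ h.le (Nat.le_of_lt (Nat.lt_two_pow_self (n := n)))
    exact absurd (le_trans h2 (hTn n)) (not_le.mpr hn)
  have hsq : ‖π s‖ ^ 2 = ‖T‖ := by
    rw [hT, ha, hmul, hstar]
    rw [sq]
    have : (ContinuousLinearMap.adjoint (π s)).comp (π s) =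
        star (π s) * (π s) := by
      rw [ContinuousLinearMap.star_eq_adjoint]; rfl
    rw [this, CStarRing.norm_star_mul_self]
  have : ‖π s‖ ^ 2 ≤ 1 := hsq ▸ hT1
  nlinarith [norm_nonneg (π s)]
end
end

section
/- Let (A, p) be a real seminormed involutive algebra, V a complex Hilbert space, α ∈ ℝ, and let φ : ball(A,p) → B(V) be homogeneous of degree α, i.e. φ(ra) = r^α φ(a) for all 0 < r < 1 and a ∈ ball(A,p). Then the formula φ̂(a) := r^α φ(r⁻¹ a) for any real r > p(a) with r > 0 yields a well-defined extension φ̂ : A → B(V) of φ, and φ is completely positive if and only if φ̂ is completely positive (meaning: for every n ∈ ℕ and every positive matrix (a_{ij}) ∈ Mₙ(A), the operator matrix (φ̂(a_{ij})) is positive). -/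
/- STATEMENT 6: Let `φ : ball(A,p) → B(V)` be homogeneous of degree `α ∈ ℝ`
(φ(ra) = r^α φ(a) for 0 < r < 1).  Then `φ̂(a) := r^α φ(r⁻¹ a)`, for any real
`r > p(a)`, `r > 0`, is a well-defined extension of `φ` to `A`, and `φ` is
completely positive (on the ball) iff `φ̂` is completely positive (on `A`). -/

open scoped ComplexOrder Matrix

noncomputable section

universe u v

/-- A matrix over an involutive algebra is positive if it is a finite sum of
matrices of the form `Bᴴ * B`. -/
def IsPosMatrix {A : Type u} [NonUnitalRing A] [StarRing A] {n : ℕ}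
    (M : Matrix (Fin n) (Fin n) A) : Prop :=
  ∃ (k : ℕ) (B : Fin k → Matrix (Fin n) (Fin n) A), M = ∑ i, (B i)ᴴ * B i


lemma IsPosMatrix.smul_real {A : Type u} [NonUnitalRing A] [Module ℝ A]
    [SMulCommClass ℝ A A] [IsScalarTower ℝ A A] [StarRing A] [StarModule ℝ A]
    {n : ℕ} {M : Matrix (Fin n) (Fin n) A} (h : IsPosMatrix M) {c : ℝ} (hc : 0 ≤ c) :
    IsPosMatrix (c • M) := by
  obtain ⟨k, B, rfl⟩ := h
  refine ⟨k, fun i => Real.sqrt c • B i, ?_⟩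
  rw [Finset.smul_sum]
  refine Finset.sum_congr rfl fun i _ => ?_
  rw [Matrix.conjTranspose_smul, star_trivial, Matrix.smul_mul, Matrix.mul_smul,
    smul_smul, Real.mul_self_sqrt hc]

theorem homogeneous_extension_completely_positive_iff
    {A : Type u} [NonUnitalRing A] [Module ℝ A] [SMulCommClass ℝ A A]
    [IsScalarTower ℝ A A] [StarRing A] [StarModule ℝ A]
    -- (A, p) is a real seminormed involutive algebra:
    (p : Seminorm ℝ A)
    (hp_mul : ∀ a b : A, p (a * b) ≤ p a * p b)
    (hp_star : ∀ a : A, p (star a) = p a)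
    {V : Type v} [NormedAddCommGroup V] [InnerProductSpace ℂ V] [CompleteSpace V]
    (α : ℝ) (φ : A → (V →L[ℂ] V))
    -- φ is homogeneous of degree α on ball(A,p):
    (hhom : ∀ (r : ℝ) (a : A), 0 < r → r < 1 → p a < 1 →
      φ (r • a) = ((r ^ α : ℝ) : ℂ) • φ a) :
    ∃ φhat : A → (V →L[ℂ] V),
      -- φ̂ is given by the formula φ̂(a) = r^α φ(r⁻¹ a) for any r > p(a), r > 0
      -- (in particular that formula is independent of the choice of r):
      (∀ (a : A) (r : ℝ), 0 < r → p a < r →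
        φhat a = ((r ^ α : ℝ) : ℂ) • φ (r⁻¹ • a)) ∧
      -- φ̂ extends φ:
      (∀ a : A, p a < 1 → φhat a = φ a) ∧
      -- φ is completely positive iff φ̂ is completely positive:
      ((∀ (n : ℕ) (a : Fin n → Fin n → A), (∀ i j, p (a i j) < 1) →
          IsPosMatrix (Matrix.of a) →
          ∀ v : Fin n → V, 0 ≤ ∑ i, ∑ j, (inner ℂ (v i) (φ (a i j) (v j)) : ℂ)) ↔
        (∀ (n : ℕ) (a : Fin n → Fin n → A), IsPosMatrix (Matrix.of a) →
          ∀ v : Fin n → V, 0 ≤ ∑ i, ∑ j, (inner ℂ (v i) (φhat (a i j) (v j)) : ℂ))) := by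
  classical
  set φhat : A → (V →L[ℂ] V) :=
    fun a => (((p a + 1) ^ α : ℝ) : ℂ) • φ ((p a + 1)⁻¹ • a) with hφhat
  have step : ∀ (a : A) (r s : ℝ), 0 < r → p a < r → r < s →
      (((s ^ α : ℝ) : ℂ)) • φ (s⁻¹ • a) = (((r ^ α : ℝ) : ℂ)) • φ (r⁻¹ • a) := by
    intro a r s hr hpa hrs
    have hs : 0 < s := hr.trans hrs
    have ht0 : 0 < r / s := div_pos hr hs
    have ht1 : r / s < 1 := (div_lt_one hs).mpr hrs
    have hpb : p (r⁻¹ • a) < 1 := by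
      rw [map_smul_eq_mul, Real.norm_eq_abs, abs_of_pos (inv_pos.mpr hr)]
      calc r⁻¹ * p a < r⁻¹ * r := mul_lt_mul_of_pos_left hpa (inv_pos.mpr hr)
      _ = 1 := inv_mul_cancel₀ hr.ne'
    have hsmul : s⁻¹ • a = (r / s) • (r⁻¹ • a) := by
      rw [smul_smul]; congr 1; field_simp
    rw [hsmul, hhom _ _ ht0 ht1 hpb, smul_smul]
    congr 1
    rw [← Complex.ofReal_mul, ← Real.mul_rpow hs.le ht0.le]
    congr 2
    field_simp
  have key : ∀ (a : A) (r s : ℝ), 0 < r → 0 < s → p a < r → p a < s →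
      (((r ^ α : ℝ) : ℂ)) • φ (r⁻¹ • a) = (((s ^ α : ℝ) : ℂ)) • φ (s⁻¹ • a) := by
    intro a r s hr hs hpr hps
    rcases lt_trichotomy r s with h | h | h
    · exact (step a r s hr hpr h).symm
    · rw [h]
    · exact step a s r hs hps h
  have hformula : ∀ (a : A) (r : ℝ), 0 < r → p a < r →
      φhat a = ((r ^ α : ℝ) : ℂ) • φ (r⁻¹ • a) := by
    intro a r hr hpr
    have h1 : 0 < p a + 1 := by positivity
    have h2 : p a < p a + 1 := lt_add_one _
    exact key a (p a + 1) r h1 hr h2 hpr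
  have hext : ∀ a : A, p a < 1 → φhat a = φ a := by
    intro a ha
    rw [hformula a 1 one_pos ha]
    simp [Real.one_rpow]
  refine ⟨φhat, hformula, hext, ?_, ?_⟩
  · intro h n a hpos v
    set r : ℝ := 1 + ∑ i, ∑ j, p (a i j) with hrdef
    have hsum0 : (0:ℝ) ≤ ∑ i, ∑ j, p (a i j) :=
      Finset.sum_nonneg fun i _ => Finset.sum_nonneg fun j _ => apply_nonneg p _
    have hr0 : 0 < r := by positivity
    have hrgt : ∀ i j, p (a i j) < r := by
      intro i j
      have hle : p (a i j) ≤ ∑ i, ∑ j, p (a i j) := by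
        calc p (a i j) ≤ ∑ j, p (a i j) :=
            Finset.single_le_sum (fun j _ => apply_nonneg p _) (Finset.mem_univ j)
        _ ≤ ∑ i, ∑ j, p (a i j) :=
            Finset.single_le_sum (fun i _ => Finset.sum_nonneg fun j _ => apply_nonneg p _)
              (Finset.mem_univ i)
      rw [hrdef]; linarith
    have hball : ∀ i j, p (r⁻¹ • a i j) < 1 := by
      intro i j
      rw [map_smul_eq_mul, Real.norm_eq_abs, abs_of_pos (inv_pos.mpr hr0)]
      calc r⁻¹ * p (a i j) < r⁻¹ * r := mul_lt_mul_of_pos_left (hrgt i j) (inv_pos.mpr hr0)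
      _ = 1 := inv_mul_cancel₀ hr0.ne'
    have hposb : IsPosMatrix (Matrix.of fun i j => r⁻¹ • a i j) := by
      have h2 := hpos.smul_real (inv_pos.mpr hr0).le
      convert h2 using 1
      ext i j; rfl
    have hS := h n (fun i j => r⁻¹ • a i j) hball hposb v
    have hrw : ∑ i, ∑ j, (inner ℂ (v i) (φhat (a i j) (v j)) : ℂ)
        = ((r ^ α : ℝ) : ℂ) * ∑ i, ∑ j, (inner ℂ (v i) (φ (r⁻¹ • a i j) (v j)) : ℂ) := by
      rw [Finset.mul_sum]
      refine Finset.sum_congr rfl fun i _ => ?_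
      rw [Finset.mul_sum]
      refine Finset.sum_congr rfl fun j _ => ?_
      rw [hformula _ r hr0 (hrgt i j), ContinuousLinearMap.smul_apply, inner_smul_right]
    rw [hrw]
    have hα : (0:ℂ) ≤ ((r ^ α : ℝ) : ℂ) := by
      rw [Complex.zero_le_real]
      positivity
    exact mul_nonneg hα hS
  · intro h n a hball hpos v
    have heq : ∑ i, ∑ j, (inner ℂ (v i) (φhat (a i j) (v j)) : ℂ)
        = ∑ i, ∑ j, (inner ℂ (v i) (φ (a i j) (v j)) : ℂ) := by
      refine Finset.sum_congr rfl fun i _ => Finset.sum_congr rfl fun j _ => ?_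
      rw [hext _ (hball i j)]
    rw [← heq]
    exact h n a hpos v
end
end

section
/- Let (A, p) be a real seminormed involutive algebra, V a complex Hilbert space, φ : ball(A,p) → B(V) a bounded positive definite function, and let (π, H, ι) be a minimal dilation of φ. Then φ is completely positive if and only if the *-representation π : ball(A,p) → B(H) is completely positive. -/
/- STATEMENT 7: Let `φ : ball(A,p) → B(V)` be a bounded positive definite function
and `(π, H, ι)` a minimal dilation of `φ`.  Then `φ` is completely positive iff
the *-representation `π` is completely positive. -/

open scoped ComplexOrder Matrix

noncomputable section

universe u v w

/-- A `B(W)`-valued function on `ball(A,p)` is completely positive if it maps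
positive matrices with entries in the ball to positive operator matrices. -/
def IsCompletelyPositiveOnBall {A : Type u} [NonUnitalRing A] [Module ℝ A] [StarRing A]
    (p : Seminorm ℝ A) {W : Type w} [NormedAddCommGroup W] [InnerProductSpace ℂ W]
    (ψ : A → (W →L[ℂ] W)) : Prop :=
  ∀ (n : ℕ) (a : Fin n → Fin n → A), (∀ i j, p (a i j) < 1) →
    IsPosMatrix (Matrix.of a) →
    ∀ w : Fin n → W, 0 ≤ ∑ i, ∑ j, (inner ℂ (w i) (ψ (a i j) (w j)) : ℂ)

lemma span_rep {A : Type u} [NonUnitalRing A] [Module ℝ A] [StarRing A]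
    (p : Seminorm ℝ A)
    {V : Type v} [NormedAddCommGroup V] [InnerProductSpace ℂ V]
    {H : Type w} [NormedAddCommGroup H] [InnerProductSpace ℂ H]
    (π : A → (H →L[ℂ] H)) (ι : V →L[ℂ] H)
    {x : H} (hx : x ∈ Submodule.span ℂ {x : H | ∃ (a : A) (v : V), p a < 1 ∧ π a (ι v) = x}) :
    ∃ (m : ℕ) (b : Fin m → A) (v : Fin m → V), 0 < m ∧ (∀ s, p (b s) < 1) ∧
      x = ∑ s, π (b s) (ι (v s)) := by
  induction hx using Submodule.span_induction with
  | mem x h =>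
      obtain ⟨a, v, ha, hav⟩ := h
      exact ⟨1, fun _ => a, fun _ => v, one_pos, fun _ => ha, by simpa using hav.symm⟩
  | zero =>
      exact ⟨1, fun _ => 0, fun _ => 0, one_pos, fun _ => by simp, by simp⟩
  | add x y hx hy ihx ihy =>
      obtain ⟨m, b, v, hm, hb, rfl⟩ := ihx
      obtain ⟨m', b', v', hm', hb', rfl⟩ := ihy
      refine ⟨m + m', Fin.append b b', Fin.append v v', by omega, ?_, ?_⟩
      · intro s
        refine Fin.addCases (fun i => ?_) (fun i => ?_) s
        · simpa [Fin.append_left] using hb i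
        · simpa [Fin.append_right] using hb' i
      · rw [Fin.sum_univ_add]
        congr 1
        · exact Finset.sum_congr rfl fun s _ => by simp [Fin.append_left]
        · exact Finset.sum_congr rfl fun s _ => by simp [Fin.append_right]
  | smul c x hx ih =>
      obtain ⟨m, b, v, hm, hb, rfl⟩ := ih
      refine ⟨m, b, fun s => c • v s, hm, hb, ?_⟩
      rw [Finset.smul_sum]
      exact Finset.sum_congr rfl fun s _ => by simp [map_smul]

lemma pad_rep {A : Type u} [NonUnitalRing A]
    {V : Type v} [NormedAddCommGroup V] [InnerProductSpace ℂ V]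
    {H : Type w} [NormedAddCommGroup H] [InnerProductSpace ℂ H]
    (π : A → (H →L[ℂ] H)) (ι : V →L[ℂ] H)
    {m M : ℕ} (hmM : m ≤ M) (b : Fin m → A) (v : Fin m → V) :
    ∑ s : Fin m, π (b s) (ι (v s)) =
      ∑ s : Fin M, π (if h : (s : ℕ) < m then b ⟨s, h⟩ else 0)
        (ι (if h : (s : ℕ) < m then v ⟨s, h⟩ else 0)) := by
  have h1 : ∀ s : Fin M,
      π (if h : (s : ℕ) < m then b ⟨s, h⟩ else 0)
        (ι (if h : (s : ℕ) < m then v ⟨s, h⟩ else 0)) =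
      (fun i : ℕ => if h : i < m then π (b ⟨i, h⟩) (ι (v ⟨i, h⟩)) else 0) (s : ℕ) := by
    intro s; by_cases h : (s : ℕ) < m <;> simp [h]
  have h2 : ∀ s : Fin m, π (b s) (ι (v s)) =
      (fun i : ℕ => if h : i < m then π (b ⟨i, h⟩) (ι (v ⟨i, h⟩)) else 0) (s : ℕ) := by
    intro s; simp [s.isLt]
  rw [Finset.sum_congr rfl (fun s _ => h1 s),
    Fin.sum_univ_eq_sum_range (fun i : ℕ => if h : i < m then π (b ⟨i, h⟩) (ι (v ⟨i, h⟩)) else 0) M,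
    Finset.sum_congr rfl (fun s _ => h2 s),
    Fin.sum_univ_eq_sum_range (fun i : ℕ => if h : i < m then π (b ⟨i, h⟩) (ι (v ⟨i, h⟩)) else 0) m]
  refine Finset.sum_subset (Finset.range_subset_range.2 hmM) ?_
  intro i _ hi
  rw [Finset.mem_range] at hi
  rw [dif_neg (by omega)]

set_option maxHeartbeats 1600000 in
theorem cp_iff_minimal_dilation_cp
    {A : Type u} [NonUnitalRing A] [Module ℝ A] [SMulCommClass ℝ A A]
    [IsScalarTower ℝ A A] [StarRing A] [StarModule ℝ A]
    -- (A, p) is a real seminormed involutive algebra: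
    (p : Seminorm ℝ A)
    (hp_mul : ∀ a b : A, p (a * b) ≤ p a * p b)
    (hp_star : ∀ a : A, p (star a) = p a)
    {V : Type v} [NormedAddCommGroup V] [InnerProductSpace ℂ V] [CompleteSpace V]
    {H : Type w} [NormedAddCommGroup H] [InnerProductSpace ℂ H] [CompleteSpace H]
    (φ : A → (V →L[ℂ] V)) (π : A → (H →L[ℂ] H)) (ι : V →L[ℂ] H)
    -- φ is bounded on ball(A,p):
    (hbdd : ∃ M : ℝ, ∀ a : A, p a < 1 → ‖φ a‖ ≤ M)
    -- φ is positive definite on ball(A,p):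
    (hpd : ∀ (m : ℕ) (a : Fin m → A), (∀ j, p (a j) < 1) →
      ∀ v : Fin m → V,
        0 ≤ ∑ j, ∑ k, (inner ℂ (v j) (φ (star (a j) * a k) (v k)) : ℂ))
    -- (π, H, ι) is a dilation of φ:
    (hπ_mul : ∀ a b : A, p a < 1 → p b < 1 → π (a * b) = (π a).comp (π b))
    (hπ_star : ∀ a : A, p a < 1 → π (star a) = ContinuousLinearMap.adjoint (π a))
    (hdil : ∀ a : A, p a < 1 →
      φ a = (ContinuousLinearMap.adjoint ι).comp ((π a).comp ι))
    -- minimality: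
    (hmin : Dense (Submodule.span ℂ
      {x : H | ∃ (a : A) (v : V), p a < 1 ∧ π a (ι v) = x} : Set H)) :
    IsCompletelyPositiveOnBall p φ ↔ IsCompletelyPositiveOnBall p π := by
  have hkey : ∀ (b c e : A), p b < 1 → p c < 1 → p e < 1 →
      ∀ (v v' : V), (inner ℂ (π b (ι v)) (π e (π c (ι v'))) : ℂ)
        = inner ℂ v (φ (star b * (e * c)) v') := by
    intro b c e hb hc he v v'
    have h0b := apply_nonneg p b
    have h0c := apply_nonneg p c
    have h0e := apply_nonneg p e
    have hec : p (e * c) < 1 := lt_of_le_of_lt (hp_mul e c) (by nlinarith)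
    have hsb : p (star b) < 1 := by rwa [hp_star]
    have h3 : p (star b * (e * c)) < 1 := by
      refine lt_of_le_of_lt (hp_mul _ _) ?_
      rw [hp_star]
      have := apply_nonneg p (e * c)
      nlinarith
    have step1 : (inner ℂ (π b (ι v)) (π e (π c (ι v'))) : ℂ)
        = inner ℂ (ι v) (π (star b) (π e (π c (ι v')))) := by
      rw [hπ_star b hb]
      exact (ContinuousLinearMap.adjoint_inner_right (π b) (ι v) _).symm
    rw [step1]
    have step2 : π e (π c (ι v')) = π (e * c) (ι v') := by rw [hπ_mul e c he hc]; rfl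
    rw [step2]
    have step3 : π (star b) (π (e * c) (ι v')) = π (star b * (e * c)) (ι v') := by
      rw [hπ_mul _ _ hsb hec]; rfl
    rw [step3, hdil _ h3]
    simp only [ContinuousLinearMap.comp_apply]
    exact (ContinuousLinearMap.adjoint_inner_right ι v _).symm
  constructor
  · -- φ CP → π CP
    intro hφ n a ha hpos w0
    set S : Set H := (Submodule.span ℂ
      {x : H | ∃ (a : A) (v : V), p a < 1 ∧ π a (ι v) = x} : Set H) with hS
    have hDzero : ∀ w ∈ Set.pi Set.univ (fun _ : Fin n => S),
        0 ≤ ∑ i, ∑ j, (inner ℂ (w i) (π (a i j) (w j)) : ℂ) := by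
      intro w hw
      have hrep : ∀ i : Fin n, ∃ (m : ℕ) (b : Fin m → A) (v : Fin m → V), 0 < m ∧
          (∀ s, p (b s) < 1) ∧ w i = ∑ s, π (b s) (ι (v s)) :=
        fun i => span_rep p π ι (hw i (Set.mem_univ i))
      choose m b v hm hb hwrep using hrep
      set M : ℕ := Finset.univ.sup m + 1 with hMdef
      have hM0 : 0 < M := Nat.succ_pos _
      have hle : ∀ i, m i ≤ M :=
        fun i => le_trans (Finset.le_sup (Finset.mem_univ i)) (Nat.le_succ _)
      have hbbv : ∃ (bb : Fin n → Fin M → A) (vv : Fin n → Fin M → V),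
          (∀ i s, p (bb i s) < 1) ∧ (∀ i, w i = ∑ s, π (bb i s) (ι (vv i s))) := by
        refine ⟨fun i s => if h : (s : ℕ) < m i then b i ⟨s, h⟩ else 0,
          fun i s => if h : (s : ℕ) < m i then v i ⟨s, h⟩ else 0, ?_, ?_⟩
        · intro i s
          by_cases h : (s : ℕ) < m i
          · simpa [h] using hb i ⟨s, h⟩
          · simp [h]
        · intro i
          exact (hwrep i).trans (pad_rep π ι (hle i) (b i) (v i))
      obtain ⟨bb, vv, hbb, hwrep'⟩ := hbbv
      set e : Fin n × Fin M ≃ Fin (n * M) := finProdFinEquiv with he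
      set cm : Fin n × Fin M → Fin n × Fin M → A :=
        fun q r => star (bb q.1 q.2) * (a q.1 r.1 * bb r.1 r.2) with hcm
      have hcmp : ∀ q r, p (cm q r) < 1 := by
        intro q r
        have h1 := apply_nonneg p (a q.1 r.1)
        have h2 := apply_nonneg p (bb q.1 q.2)
        have h3 := apply_nonneg p (bb r.1 r.2)
        have h4 := hbb q.1 q.2
        have h5 := hbb r.1 r.2
        have h6 := ha q.1 r.1
        calc p (cm q r) ≤ p (star (bb q.1 q.2)) * p (a q.1 r.1 * bb r.1 r.2) := hp_mul _ _
          _ ≤ p (star (bb q.1 q.2)) * (p (a q.1 r.1) * p (bb r.1 r.2)) :=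
              mul_le_mul_of_nonneg_left (hp_mul _ _) (apply_nonneg p _)
          _ < 1 := by
              rw [hp_star]
              have h7 : p (a q.1 r.1) * p (bb r.1 r.2) < 1 := by nlinarith
              nlinarith [mul_nonneg h1 h3]
      obtain ⟨K, B, hB⟩ := hpos
      have haij : ∀ i j, a i j = ∑ k, ∑ l, star (B k l i) * B k l j := by
        intro i j
        have h := Matrix.ext_iff.2 hB i j
        simpa [Matrix.sum_apply, Matrix.mul_apply, Matrix.conjTranspose_apply] using h
      have hposc : IsPosMatrix (Matrix.of fun k l : Fin (n * M) => cm (e.symm k) (e.symm l)) := by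
        refine ⟨K, fun k => Matrix.of fun r s =>
          if (e.symm r).2 = (⟨0, hM0⟩ : Fin M) then
            B k (e.symm r).1 (e.symm s).1 * bb (e.symm s).1 (e.symm s).2 else 0, ?_⟩
        ext r s
        simp only [Matrix.of_apply, Matrix.sum_apply, Matrix.mul_apply,
          Matrix.conjTranspose_apply]
        have hrho : ∀ k : Fin K, (∑ ρ : Fin (n * M),
            star (if (e.symm ρ).2 = (⟨0, hM0⟩ : Fin M) then
                B k (e.symm ρ).1 (e.symm r).1 * bb (e.symm r).1 (e.symm r).2 else 0)
              * (if (e.symm ρ).2 = (⟨0, hM0⟩ : Fin M) then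
                B k (e.symm ρ).1 (e.symm s).1 * bb (e.symm s).1 (e.symm s).2 else 0))
            = ∑ l : Fin n,
              star (B k l (e.symm r).1 * bb (e.symm r).1 (e.symm r).2)
                * (B k l (e.symm s).1 * bb (e.symm s).1 (e.symm s).2) := by
          intro k
          rw [Equiv.sum_comp e.symm (fun q : Fin n × Fin M =>
            star (if q.2 = (⟨0, hM0⟩ : Fin M) then
                B k q.1 (e.symm r).1 * bb (e.symm r).1 (e.symm r).2 else 0)
              * (if q.2 = (⟨0, hM0⟩ : Fin M) then
                B k q.1 (e.symm s).1 * bb (e.symm s).1 (e.symm s).2 else 0)),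
            Fintype.sum_prod_type]
          refine Finset.sum_congr rfl fun l _ => ?_
          have hstep : ∀ u : Fin M,
              star (if u = (⟨0, hM0⟩ : Fin M) then
                  B k l (e.symm r).1 * bb (e.symm r).1 (e.symm r).2 else 0)
                * (if u = (⟨0, hM0⟩ : Fin M) then
                  B k l (e.symm s).1 * bb (e.symm s).1 (e.symm s).2 else 0)
              = if u = (⟨0, hM0⟩ : Fin M) then
                  star (B k l (e.symm r).1 * bb (e.symm r).1 (e.symm r).2)
                    * (B k l (e.symm s).1 * bb (e.symm s).1 (e.symm s).2) else 0 := by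
            intro u; split <;> simp
          rw [Finset.sum_congr rfl fun u _ => hstep u,
            Finset.sum_ite_eq' Finset.univ (⟨0, hM0⟩ : Fin M)]
          simp
        rw [Finset.sum_congr rfl fun k _ => hrho k]
        simp only [hcm]
        rw [haij (e.symm r).1 (e.symm s).1, Finset.sum_mul, Finset.mul_sum]
        refine Finset.sum_congr rfl fun k _ => ?_
        rw [Finset.sum_mul, Finset.mul_sum]
        refine Finset.sum_congr rfl fun l _ => ?_
        simp [star_mul, mul_assoc]
      have h0 := hφ (n * M) (fun k l => cm (e.symm k) (e.symm l)) (fun k l => hcmp _ _) hposc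
        (fun k => vv (e.symm k).1 (e.symm k).2)
      have hsum : (∑ k, ∑ l, (inner ℂ (vv (e.symm k).1 (e.symm k).2)
            (φ (cm (e.symm k) (e.symm l)) (vv (e.symm l).1 (e.symm l).2)) : ℂ))
          = ∑ q : Fin n × Fin M, ∑ r : Fin n × Fin M,
            (inner ℂ (vv q.1 q.2) (φ (cm q r) (vv r.1 r.2)) : ℂ) := by
        calc (∑ k, ∑ l, (inner ℂ (vv (e.symm k).1 (e.symm k).2)
              (φ (cm (e.symm k) (e.symm l)) (vv (e.symm l).1 (e.symm l).2)) : ℂ))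
            = ∑ k : Fin (n * M), ∑ r : Fin n × Fin M, (inner ℂ (vv (e.symm k).1 (e.symm k).2)
              (φ (cm (e.symm k) r) (vv r.1 r.2)) : ℂ) :=
              Finset.sum_congr rfl fun k _ => Equiv.sum_comp e.symm (fun r : Fin n × Fin M =>
                (inner ℂ (vv (e.symm k).1 (e.symm k).2) (φ (cm (e.symm k) r) (vv r.1 r.2)) : ℂ))
          _ = _ := Equiv.sum_comp e.symm (fun q : Fin n × Fin M =>
              ∑ r : Fin n × Fin M, (inner ℂ (vv q.1 q.2) (φ (cm q r) (vv r.1 r.2)) : ℂ))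
      rw [hsum] at h0
      have hexp : ∀ i j, (inner ℂ (w i) (π (a i j) (w j)) : ℂ)
          = ∑ s : Fin M, ∑ t : Fin M, (inner ℂ (vv i s) (φ (cm (i, s) (j, t)) (vv j t)) : ℂ) := by
        intro i j
        rw [hwrep' i, hwrep' j, map_sum, sum_inner]
        refine Finset.sum_congr rfl fun s _ => ?_
        rw [inner_sum]
        refine Finset.sum_congr rfl fun t _ => ?_
        exact hkey (bb i s) (bb j t) (a i j) (hbb i s) (hbb j t) (ha i j) (vv i s) (vv j t)
      calc (0 : ℂ) ≤ _ := h0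
        _ = ∑ i, ∑ j, ∑ s : Fin M, ∑ t : Fin M,
            (inner ℂ (vv i s) (φ (cm (i, s) (j, t)) (vv j t)) : ℂ) := by
            simp only [Fintype.sum_prod_type]
            exact Finset.sum_congr rfl fun i _ => Finset.sum_comm
        _ = ∑ i, ∑ j, (inner ℂ (w i) (π (a i j) (w j)) : ℂ) :=
            Finset.sum_congr rfl fun i _ => Finset.sum_congr rfl fun j _ => (hexp i j).symm
    have hF : Continuous (fun w : Fin n → H => ∑ i, ∑ j, (inner ℂ (w i) (π (a i j) (w j)) : ℂ)) := by
      refine continuous_finset_sum _ fun i _ => continuous_finset_sum _ fun j _ => ?_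
      exact (continuous_apply i).inner ((π (a i j)).continuous.comp (continuous_apply j))
    have hclosed : IsClosed {z : ℂ | 0 ≤ z} := by
      have hset : {z : ℂ | 0 ≤ z} = Complex.re ⁻¹' Set.Ici 0 ∩ Complex.im ⁻¹' {0} := by
        ext z
        simp [Complex.le_def, eq_comm]
      rw [hset]
      exact (isClosed_Ici.preimage Complex.continuous_re).inter
        (isClosed_singleton.preimage Complex.continuous_im)
    have hdense : Dense (Set.pi Set.univ (fun _ : Fin n => S)) := dense_pi Set.univ fun i _ => hmin
    have hmem : (fun w : Fin n → H => ∑ i, ∑ j, (inner ℂ (w i) (π (a i j) (w j)) : ℂ)) w0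
        ∈ closure {z : ℂ | 0 ≤ z} := by
      have himg : (fun w : Fin n → H => ∑ i, ∑ j, (inner ℂ (w i) (π (a i j) (w j)) : ℂ)) ''
          (Set.pi Set.univ fun _ : Fin n => S) ⊆ {z : ℂ | 0 ≤ z} := by
        rintro z ⟨w, hw, rfl⟩
        exact hDzero w hw
      apply closure_mono himg
      exact image_closure_subset_closure_image hF ⟨w0, hdense w0, rfl⟩
    exact hclosed.closure_subset hmem
  · intro hπcp n a ha hpos w0
    have h := hπcp n a ha hpos fun i => ι (w0 i)
    have e1 : ∀ i j, (inner ℂ (ι (w0 i)) (π (a i j) (ι (w0 j))) : ℂ)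
        = inner ℂ (w0 i) (φ (a i j) (w0 j)) := by
      intro i j
      rw [hdil (a i j) (ha i j)]
      simp only [ContinuousLinearMap.comp_apply]
      exact (ContinuousLinearMap.adjoint_inner_right ι (w0 i) _).symm
    simpa only [e1] using h
end
end

section
/- Let (A, p) be a real seminormed involutive algebra, H a complex Hilbert space, and π : ball(A,p) → B(H) a *-representation with sup_{a ∈ ball(A,p)} ‖π(a)‖ < ∞. Then π is completely positive if and only if there exists a dense subset D ⊆ H such that for every v ∈ D the scalar-valued function π^v : ball(A,p) → ℂ, π^v(a) := ⟨π(a)v, v⟩, is completely positive. -/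
/- STATEMENT 8: A bounded *-representation `π : ball(A,p) → B(H)` is completely
positive iff there is a dense subset `D ⊆ H` such that for every `v ∈ D` the
scalar function `π^v(a) = ⟨π(a)v, v⟩` is completely positive. -/

open scoped ComplexOrder Matrix

noncomputable section
set_option linter.unusedSectionVars false
set_option maxHeartbeats 1000000

universe u w

section Rep
variable {A : Type u} [NonUnitalRing A] [Module ℝ A] [SMulCommClass ℝ A A]
    [IsScalarTower ℝ A A] [StarRing A] [StarModule ℝ A]
    (p : Seminorm ℝ A)
    {H : Type w} [NormedAddCommGroup H] [InnerProductSpace ℂ H] [CompleteSpace H]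
    (π : A → (H →L[ℂ] H))

lemma pmul_lt (hp_mul : ∀ a b : A, p (a * b) ≤ p a * p b) {x y : A}
    (hx : p x < 1) (hy : p y < 1) : p (x * y) < 1 :=
  lt_of_le_of_lt (hp_mul x y) (by nlinarith [apply_nonneg p x, apply_nonneg p y])

lemma posMatrix_entry {n k : ℕ} {a : Fin n → Fin n → A}
    {B : Fin k → Matrix (Fin n) (Fin n) A}
    (h : Matrix.of a = ∑ t, (B t)ᴴ * B t) (i j : Fin n) :
    a i j = ∑ t, ∑ l, star (B t l i) * B t l j := by
  have := congrFun (congrFun h i) j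
  simpa [Matrix.sum_apply, Matrix.mul_apply, Matrix.conjTranspose_apply] using this

def gens (v : H) : Set H := insert v {u | ∃ c : A, p c < 1 ∧ π c v = u}

def cyc (v : H) : Submodule ℂ H := (Submodule.span ℂ (gens p π v)).topologicalClosure

lemma cyc_coe (v : H) : (cyc p π v : Set H) = closure (Submodule.span ℂ (gens p π v) : Set H) :=
  Submodule.topologicalClosure_coe _

lemma self_mem_cyc (v : H) : v ∈ cyc p π v :=
  Submodule.le_topologicalClosure _ (Submodule.subset_span (Set.mem_insert _ _))

lemma cyc_invariant (hp_mul : ∀ a b : A, p (a * b) ≤ p a * p b)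
    (hπ_mul : ∀ a b : A, p a < 1 → p b < 1 → π (a * b) = (π a).comp (π b))
    {c : A} (hc : p c < 1) {v x : H} (hx : x ∈ cyc p π v) : π c x ∈ cyc p π v := by
  have hmap : Set.MapsTo (π c) (Submodule.span ℂ (gens p π v) : Set H)
      (Submodule.span ℂ (gens p π v) : Set H) := by
    have hle : Submodule.span ℂ (gens p π v) ≤
        (Submodule.span ℂ (gens p π v)).comap ((π c) : H →ₗ[ℂ] H) := by
      rw [Submodule.span_le]
      rintro g hg
      rcases Set.mem_insert_iff.1 hg with rfl | ⟨c', hc', rfl⟩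
      · exact Submodule.subset_span (Set.mem_insert_iff.2 (Or.inr ⟨c, hc, rfl⟩))
      · have hcc : π c (π c' v) = π (c * c') v := by
          rw [hπ_mul c c' hc hc']; rfl
        have : π c (π c' v) ∈ Submodule.span ℂ (gens p π v) := by
          rw [hcc]
          exact Submodule.subset_span
            (Set.mem_insert_iff.2 (Or.inr ⟨c * c', pmul_lt p hp_mul hc hc', rfl⟩))
        exact this
    intro y hy
    exact hle hy
  have hx' : x ∈ closure (Submodule.span ℂ (gens p π v) : Set H) := by
    rw [← cyc_coe] at *; exact hx
  have := map_mem_closure (π c).continuous hx' hmap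
  rw [← SetLike.mem_coe, cyc_coe]
  exact this

lemma orth_invariant
    (hp_star : ∀ a : A, p (star a) = p a)
    (hp_mul : ∀ a b : A, p (a * b) ≤ p a * p b)
    (hπ_mul : ∀ a b : A, p a < 1 → p b < 1 → π (a * b) = (π a).comp (π b))
    (hπ_star : ∀ a : A, p a < 1 → π (star a) = ContinuousLinearMap.adjoint (π a))
    {c : A} (hc : p c < 1) {v x : H} (hx : x ∈ (cyc p π v)ᗮ) : π c x ∈ (cyc p π v)ᗮ := by
  rw [Submodule.mem_orthogonal] at hx ⊢
  intro u hu
  have hcs : p (star c) < 1 := by rw [hp_star]; exact hc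
  have h1 : π (star c) u ∈ cyc p π v := cyc_invariant p π hp_mul hπ_mul hcs hu
  have : (inner ℂ u (π c x) : ℂ) = inner ℂ (ContinuousLinearMap.adjoint (π c) u) x :=
    (ContinuousLinearMap.adjoint_inner_left _ _ _).symm
  rw [this, ← hπ_star c hc]
  exact hx _ h1

lemma cyc_le_orth
    (hp_star : ∀ a : A, p (star a) = p a)
    (hp_mul : ∀ a b : A, p (a * b) ≤ p a * p b)
    (hπ_mul : ∀ a b : A, p a < 1 → p b < 1 → π (a * b) = (π a).comp (π b))
    (hπ_star : ∀ a : A, p a < 1 → π (star a) = ContinuousLinearMap.adjoint (π a))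
    {u v : H} (hu : u ∈ (cyc p π v)ᗮ) : cyc p π u ≤ (cyc p π v)ᗮ := by
  apply Submodule.topologicalClosure_minimal
  · rw [Submodule.span_le]
    rintro g hg
    rcases Set.mem_insert_iff.1 hg with rfl | ⟨c, hc, rfl⟩
    · exact hu
    · exact orth_invariant p π hp_star hp_mul hπ_mul hπ_star hc hu
  · exact Submodule.isClosed_orthogonal _


def Rm : Option A → A → A := fun oc y => oc.elim y (fun c => y * c)
def Lm : Option A → A → A := fun oc y => oc.elim y (fun c => star c * y)

lemma sum_RL {ι : Type*} [Fintype ι] (oc od : Option A) (F G : ι → A) :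
    ∑ l, star (Rm oc (F l)) * Rm od (G l) = Lm oc (Rm od (∑ l, star (F l) * G l)) := by
  cases oc <;> cases od <;>
    simp [Rm, Lm, Finset.sum_mul, Finset.mul_sum, star_mul, mul_assoc]

lemma core_cp
    (hp_mul : ∀ a b : A, p (a * b) ≤ p a * p b)
    (hp_star : ∀ a : A, p (star a) = p a)
    (hπ_mul : ∀ a b : A, p a < 1 → p b < 1 → π (a * b) = (π a).comp (π b))
    (hπ_star : ∀ a : A, p a < 1 → π (star a) = ContinuousLinearMap.adjoint (π a))
    (v : H)
    (hv : ∀ (N : ℕ) (b : Fin N → Fin N → A), (∀ I J, p (b I J) < 1) →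
      IsPosMatrix (Matrix.of b) →
      (Matrix.of fun I J => (inner ℂ v (π (b I J) v) : ℂ)).PosSemidef)
    {n m : ℕ} (a : Fin n → Fin n → A) (ha : ∀ i j, p (a i j) < 1)
    (hpos : IsPosMatrix (Matrix.of a))
    (o : Fin m → Option A) (ho : ∀ r c, o r = some c → p c < 1)
    (g : Fin m → H)
    (hg : ∀ r, (o r = none → g r = v) ∧ ∀ c, o r = some c → g r = π c v)
    (x : Fin n → Fin m → ℂ) :
    0 ≤ ∑ i, ∑ j, (inner ℂ (∑ r, x i r • g r) (π (a i j) (∑ s, x j s • g s)) : ℂ) := by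
  rcases Nat.eq_zero_or_pos m with hm | hm
  · subst hm; simp
  have r₀ : Fin m := ⟨0, hm⟩
  classical
  set E : Fin n × Fin m → Fin n × Fin m → A :=
    fun I J => Lm (o I.2) (Rm (o J.2) (a I.1 J.1)) with hE
  have hEp : ∀ I J, p (E I J) < 1 := by
    rintro ⟨i, r⟩ ⟨j, s⟩
    rcases h1 : o r with _ | c <;> rcases h2 : o s with _ | c' <;>
      simp only [hE, h1, h2, Rm, Lm, Option.elim]
    · exact ha i j
    · exact pmul_lt p hp_mul (ha i j) (ho s c' h2)
    · exact pmul_lt p hp_mul (by rw [hp_star]; exact ho r c h1) (ha i j)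
    · exact pmul_lt p hp_mul (by rw [hp_star]; exact ho r c h1)
        (pmul_lt p hp_mul (ha i j) (ho s c' h2))
  have hinner : ∀ (i j : Fin n) (r s : Fin m),
      (inner ℂ (g r) (π (a i j) (g s)) : ℂ) = inner ℂ v (π (E (i, r) (j, s)) v) := by
    intro i j r s
    rcases h1 : o r with _ | c <;> rcases h2 : o s with _ | c' <;>
      simp only [hE, h1, h2, Rm, Lm, Option.elim]
    · rw [(hg r).1 h1, (hg s).1 h2]
    · rw [(hg r).1 h1, (hg s).2 c' h2, hπ_mul (a i j) c' (ha i j) (ho s c' h2)]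
      rfl
    · rw [(hg r).2 c h1, (hg s).1 h2,
        hπ_mul (star c) (a i j) (by rw [hp_star]; exact ho r c h1) (ha i j),
        ContinuousLinearMap.comp_apply, hπ_star c (ho r c h1),
        ContinuousLinearMap.adjoint_inner_right]
    · rw [(hg r).2 c h1, (hg s).2 c' h2,
        hπ_mul (star c) (a i j * c') (by rw [hp_star]; exact ho r c h1)
          (pmul_lt p hp_mul (ha i j) (ho s c' h2)),
        ContinuousLinearMap.comp_apply, hπ_star c (ho r c h1),
        ContinuousLinearMap.adjoint_inner_right,
        hπ_mul (a i j) c' (ha i j) (ho s c' h2), ContinuousLinearMap.comp_apply]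
  -- reindex to Fin (n * m)
  set e : Fin n × Fin m ≃ Fin (n * m) := finProdFinEquiv with he
  set b : Fin (n * m) → Fin (n * m) → A := fun I J => E (e.symm I) (e.symm J) with hb
  have hbp : ∀ I J, p (b I J) < 1 := fun I J => hEp _ _
  obtain ⟨k, B, hB⟩ := hpos
  have hent := posMatrix_entry hB
  set C : Fin k → Matrix (Fin (n * m)) (Fin (n * m)) A := fun t =>
    Matrix.of fun I J =>
      if (e.symm I).2 = r₀ then Rm (o (e.symm J).2) (B t (e.symm I).1 (e.symm J).1)
      else 0 with hC
  have sum_RL2 : ∀ (oc od : Option A) (F G : Fin k → Fin n → A),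
      ∑ t, ∑ l, star (Rm oc (F t l)) * Rm od (G t l) =
        Lm oc (Rm od (∑ t, ∑ l, star (F t l) * G t l)) := by
    intro oc od F G
    cases oc <;> cases od <;>
      simp [Rm, Lm, Finset.sum_mul, Finset.mul_sum, star_mul, mul_assoc]
  have hbpos : IsPosMatrix (Matrix.of b) := by
    refine ⟨k, C, ?_⟩
    ext I J
    have hCalc : ∀ t, ((C t)ᴴ * C t) I J =
        ∑ l, star (Rm (o (e.symm I).2) (B t l (e.symm I).1)) *
          Rm (o (e.symm J).2) (B t l (e.symm J).1) := by
      intro t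
      rw [Matrix.mul_apply, ← Equiv.sum_comp e (fun K => ((C t)ᴴ) I K * (C t) K J)]
      simp only [Matrix.conjTranspose_apply, hC, Matrix.of_apply, Equiv.symm_apply_apply]
      rw [Fintype.sum_prod_type]
      refine Finset.sum_congr rfl fun l _ => ?_
      have hterm : ∀ tt : Fin m,
          star (if tt = r₀ then Rm (o (e.symm I).2) (B t l (e.symm I).1) else 0) *
            (if tt = r₀ then Rm (o (e.symm J).2) (B t l (e.symm J).1) else 0) =
          (if tt = r₀ then star (Rm (o (e.symm I).2) (B t l (e.symm I).1)) *
            Rm (o (e.symm J).2) (B t l (e.symm J).1) else 0) := by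
        intro tt; split_ifs <;> simp
      rw [Finset.sum_congr rfl (fun tt _ => hterm tt), Finset.sum_ite_eq' Finset.univ r₀]
      simp
    rw [Matrix.sum_apply]
    simp only [hCalc]
    rw [sum_RL2]
    have hofb : Matrix.of b I J =
        Lm (o (e.symm I).2) (Rm (o (e.symm J).2) (a (e.symm I).1 (e.symm J).1)) := rfl
    rw [hofb, hent (e.symm I).1 (e.symm J).1]
  have hPSD := hv (n * m) b hbp hbpos
  set X : Fin (n * m) → ℂ := fun I => x (e.symm I).1 (e.symm I).2 with hX
  have h0 := hPSD.dotProduct_mulVec_nonneg X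
  have hL : dotProduct (star X)
        ((Matrix.of fun I J => (inner ℂ v (π (b I J) v) : ℂ)) *ᵥ X) =
      ∑ q : Fin n × Fin m, ∑ q' : Fin n × Fin m,
        (starRingEnd ℂ) (x q.1 q.2) * x q'.1 q'.2 * (inner ℂ v (π (E q q') v) : ℂ) := by
    simp only [dotProduct, Matrix.mulVec, Pi.star_apply, Matrix.of_apply,
      Finset.mul_sum]
    rw [← Equiv.sum_comp e]
    refine Finset.sum_congr rfl fun q _ => ?_
    rw [← Equiv.sum_comp e]
    refine Finset.sum_congr rfl fun q' _ => ?_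
    simp only [hX, hb, Equiv.symm_apply_apply, RCLike.star_def]
    ring
  have hexp : ∀ i j, (inner ℂ (∑ r, x i r • g r) (π (a i j) (∑ s, x j s • g s)) : ℂ) =
      ∑ r, ∑ s, (starRingEnd ℂ) (x i r) * x j s *
        (inner ℂ v (π (E (i, r) (j, s)) v) : ℂ) := by
    intro i j
    simp only [map_sum, map_smul, sum_inner, inner_sum, inner_smul_left,
      inner_smul_right, hinner, Finset.mul_sum]
    rw [Finset.sum_comm]
    exact Finset.sum_congr rfl fun r _ => Finset.sum_congr rfl fun s _ => by ring
  have hR : ∑ i, ∑ j, (inner ℂ (∑ r, x i r • g r) (π (a i j) (∑ s, x j s • g s)) : ℂ) =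
      ∑ q : Fin n × Fin m, ∑ q' : Fin n × Fin m,
        (starRingEnd ℂ) (x q.1 q.2) * x q'.1 q'.2 * (inner ℂ v (π (E q q') v) : ℂ) := by
    calc ∑ i, ∑ j, (inner ℂ (∑ r, x i r • g r) (π (a i j) (∑ s, x j s • g s)) : ℂ)
        = ∑ i, ∑ j, ∑ r, ∑ s, (starRingEnd ℂ) (x i r) * x j s *
            (inner ℂ v (π (E (i, r) (j, s)) v) : ℂ) := by
          exact Finset.sum_congr rfl fun i _ => Finset.sum_congr rfl fun j _ => hexp i j
      _ = ∑ i, ∑ r, ∑ j, ∑ s, (starRingEnd ℂ) (x i r) * x j s *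
            (inner ℂ v (π (E (i, r) (j, s)) v) : ℂ) :=
          Finset.sum_congr rfl fun i _ => Finset.sum_comm
      _ = ∑ q : Fin n × Fin m, ∑ j, ∑ s, (starRingEnd ℂ) (x q.1 q.2) * x j s *
            (inner ℂ v (π (E q (j, s)) v) : ℂ) :=
          (Fintype.sum_prod_type (f := fun q : Fin n × Fin m => ∑ j, ∑ s,
            (starRingEnd ℂ) (x q.1 q.2) * x j s *
              (inner ℂ v (π (E q (j, s)) v) : ℂ))).symm
      _ = ∑ q : Fin n × Fin m, ∑ q' : Fin n × Fin m,
            (starRingEnd ℂ) (x q.1 q.2) * x q'.1 q'.2 *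
              (inner ℂ v (π (E q q') v) : ℂ) :=
          Finset.sum_congr rfl fun q _ =>
            (Fintype.sum_prod_type (f := fun q' : Fin n × Fin m =>
              (starRingEnd ℂ) (x q.1 q.2) * x q'.1 q'.2 *
                (inner ℂ v (π (E q q') v) : ℂ))).symm
  rw [hL] at h0
  rw [hR]
  exact h0

lemma cyc_cp
    (hp_mul : ∀ a b : A, p (a * b) ≤ p a * p b)
    (hp_star : ∀ a : A, p (star a) = p a)
    (hπ_mul : ∀ a b : A, p a < 1 → p b < 1 → π (a * b) = (π a).comp (π b))
    (hπ_star : ∀ a : A, p a < 1 → π (star a) = ContinuousLinearMap.adjoint (π a))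
    (v : H)
    (hv : ∀ (N : ℕ) (b : Fin N → Fin N → A), (∀ I J, p (b I J) < 1) →
      IsPosMatrix (Matrix.of b) →
      (Matrix.of fun I J => (inner ℂ v (π (b I J) v) : ℂ)).PosSemidef)
    {n : ℕ} (a : Fin n → Fin n → A) (ha : ∀ i j, p (a i j) < 1)
    (hpos : IsPosMatrix (Matrix.of a))
    (w : Fin n → H) (hw : ∀ i, w i ∈ cyc p π v) :
    0 ≤ ∑ i, ∑ j, (inner ℂ (w i) (π (a i j) (w j)) : ℂ) := by
  classical
  suffices hS : ∀ w : Fin n → H, (∀ i, w i ∈ Submodule.span ℂ (gens p π v)) →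
      0 ≤ ∑ i, ∑ j, (inner ℂ (w i) (π (a i j) (w j)) : ℂ) by
    have hQcont : Continuous fun w : Fin n → H =>
        ∑ i, ∑ j, (inner ℂ (w i) (π (a i j) (w j)) : ℂ) := by
      refine continuous_finset_sum _ fun i _ => continuous_finset_sum _ fun j _ => ?_
      exact Continuous.inner (continuous_apply i)
        ((π (a i j)).continuous.comp (continuous_apply j))
    have hclosed : IsClosed {z : ℂ | 0 ≤ z} := by
      have hset : {z : ℂ | 0 ≤ z} = Complex.re ⁻¹' Set.Ici 0 ∩ Complex.im ⁻¹' {0} := by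
        ext z
        simp only [Set.mem_setOf_eq, Set.mem_inter_iff, Set.mem_preimage, Set.mem_Ici,
          Set.mem_singleton_iff, Complex.le_def, Complex.zero_re, Complex.zero_im]
        exact and_congr Iff.rfl eq_comm
      rw [hset]
      exact (isClosed_Ici.preimage Complex.continuous_re).inter
        (isClosed_singleton.preimage Complex.continuous_im)
    have hsub : {w : Fin n → H | ∀ i, w i ∈ Submodule.span ℂ (gens p π v)} ⊆
        (fun w : Fin n → H => ∑ i, ∑ j, (inner ℂ (w i) (π (a i j) (w j)) : ℂ)) ⁻¹'
          {z : ℂ | 0 ≤ z} := fun y hy => hS y hy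
    have hwc : w ∈ closure {w : Fin n → H | ∀ i, w i ∈ Submodule.span ℂ (gens p π v)} := by
      have hset : {w : Fin n → H | ∀ i, w i ∈ Submodule.span ℂ (gens p π v)} =
          Set.pi Set.univ fun _ : Fin n => (Submodule.span ℂ (gens p π v) : Set H) := by
        ext y; simp [Set.mem_pi]
      rw [hset, closure_pi_set]
      intro i _
      have hwi := hw i
      rw [← SetLike.mem_coe, cyc_coe] at hwi
      exact hwi
    exact closure_minimal hsub (hclosed.preimage hQcont) hwc
  intro w hw
  have hfin : ∀ i, ∃ t : Finset H, ↑t ⊆ gens p π v ∧ w i ∈ Submodule.span ℂ (t : Set H) :=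
    fun i => Submodule.mem_span_finite_of_mem_span (hw i)
  choose t ht hwt using hfin
  set T : Finset H := Finset.univ.biUnion t with hT
  have hTsub : (T : Set H) ⊆ gens p π v := by
    intro u hu
    rw [Finset.mem_coe, hT, Finset.mem_biUnion] at hu
    obtain ⟨i, _, hi⟩ := hu
    exact ht i hi
  have hwT : ∀ i, w i ∈ Submodule.span ℂ (T : Set H) := by
    intro i
    refine Submodule.span_mono ?_ (hwt i)
    intro u hu
    exact Finset.mem_coe.2 (Finset.mem_biUnion.2 ⟨i, Finset.mem_univ i, Finset.mem_coe.1 hu⟩)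
  set m := T.card with hm
  set eT := T.equivFin with heT
  set g : Fin m → H := fun r => ((eT.symm r : T) : H) with hgdef
  have hrange : Set.range g = (T : Set H) := by
    ext u; constructor
    · rintro ⟨r, rfl⟩; exact (eT.symm r).2
    · intro hu; exact ⟨eT ⟨u, hu⟩, by simp [hgdef]⟩
  have hcoef : ∀ i, ∃ xx : Fin m → ℂ, ∑ r, xx r • g r = w i := by
    intro i
    have hmem : w i ∈ Submodule.span ℂ (Set.range g) := by rw [hrange]; exact hwT i
    exact (Submodule.mem_span_range_iff_exists_fun ℂ).1 hmem
  choose x hx using hcoef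
  have hcls : ∀ r : Fin m, ∃ oc : Option A, (oc = none → g r = v) ∧
      (∀ c, oc = some c → p c < 1 ∧ g r = π c v) := by
    intro r
    have hgr : g r ∈ gens p π v := hTsub (by rw [← hrange]; exact ⟨r, rfl⟩)
    rcases Set.mem_insert_iff.1 hgr with h | ⟨c, hc, hcv⟩
    · refine ⟨none, ?_, ?_⟩
      · intro _; exact h
      · intro c h'; cases h'
    · refine ⟨some c, ?_, ?_⟩
      · intro h'; cases h'
      · intro c' h'
        obtain rfl : c = c' := Option.some.inj h'
        exact ⟨hc, hcv.symm⟩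
  choose o hoN hoS using hcls
  have ho : ∀ r c, o r = some c → p c < 1 := fun r c h => (hoS r c h).1
  have hgprop : ∀ r, (o r = none → g r = v) ∧ ∀ c, o r = some c → g r = π c v :=
    fun r => ⟨hoN r, fun c h => (hoS r c h).2⟩
  have hcore := core_cp p π hp_mul hp_star hπ_mul hπ_star v hv a ha hpos o ho g hgprop x
  simp only [hx] at hcore
  exact hcore

lemma exists_decomp
    (hp_mul : ∀ a b : A, p (a * b) ≤ p a * p b)
    (hp_star : ∀ a : A, p (star a) = p a)
    (hπ_mul : ∀ a b : A, p a < 1 → p b < 1 → π (a * b) = (π a).comp (π b))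
    (hπ_star : ∀ a : A, p a < 1 → π (star a) = ContinuousLinearMap.adjoint (π a)) :
    ∀ (m : ℕ) (w : Fin m → H), ∃ (u : Fin m → H) (y : Fin m → Fin m → H),
      (∀ i k, y i k ∈ cyc p π (u k)) ∧ (∀ i, ∑ k, y i k = w i) ∧
      (∀ k l, k ≠ l → ∀ z1 ∈ cyc p π (u k), ∀ z2 ∈ cyc p π (u l),
        (inner ℂ z1 z2 : ℂ) = 0) := by
  intro m
  induction m with
  | zero =>
    intro w
    exact ⟨Fin.elim0, Fin.elim0, fun i => i.elim0, fun i => i.elim0, fun k => k.elim0⟩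
  | succ m ih =>
    intro w
    obtain ⟨u', y', hmem', hsum', horth'⟩ := ih (Fin.init w)
    have hproj : ∀ k : Fin m, ∃ q : H, q ∈ cyc p π (u' k) ∧
        ∀ z ∈ cyc p π (u' k), (inner ℂ z (w (Fin.last m) - q) : ℂ) = 0 := by
      intro k
      haveI : CompleteSpace (cyc p π (u' k)) :=
        (Submodule.isClosed_topologicalClosure _).completeSpace_coe
      refine ⟨(cyc p π (u' k)).orthogonalProjectionOnto (w (Fin.last m)),
        ((cyc p π (u' k)).orthogonalProjectionOnto (w (Fin.last m))).2, ?_⟩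
      intro z hz
      have hsub := Submodule.sub_starProjection_mem_orthogonal
        (K := cyc p π (u' k)) (w (Fin.last m))
      exact (Submodule.mem_orthogonal _ _).1 hsub z hz
    choose q hqmem hqorth using hproj
    set ul : H := w (Fin.last m) - ∑ k, q k with hul
    have hulorth : ∀ k : Fin m, ul ∈ (cyc p π (u' k))ᗮ := by
      intro k
      rw [Submodule.mem_orthogonal]
      intro z hz
      have hsplit : ul = (w (Fin.last m) - q k) - ∑ l ∈ Finset.univ.erase k, q l := by
        rw [hul, ← Finset.add_sum_erase _ _ (Finset.mem_univ k)]
        abel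
      rw [hsplit, inner_sub_right, inner_sum, hqorth k z hz]
      have hzero : ∀ l ∈ Finset.univ.erase k, (inner ℂ z (q l) : ℂ) = 0 := by
        intro l hl
        exact horth' k l (Ne.symm (Finset.mem_erase.1 hl).1) z hz (q l) (hqmem l)
      rw [Finset.sum_congr rfl hzero]
      simp
    refine ⟨Fin.snoc u' ul, Fin.snoc (fun i => Fin.snoc (y' i) 0) (Fin.snoc q ul),
      ?_, ?_, ?_⟩
    · intro i k
      obtain ⟨i', rfl⟩ | rfl := Fin.eq_castSucc_or_eq_last i <;>
        obtain ⟨k', rfl⟩ | rfl := Fin.eq_castSucc_or_eq_last k <;>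
          simp only [Fin.snoc_castSucc, Fin.snoc_last]
      · exact hmem' i' k'
      · exact Submodule.zero_mem _
      · exact hqmem k'
      · exact self_mem_cyc p π ul
    · intro i
      obtain ⟨i', rfl⟩ | rfl := Fin.eq_castSucc_or_eq_last i
      · rw [Fin.sum_univ_castSucc]
        simp only [Fin.snoc_castSucc, Fin.snoc_last]
        simpa [Fin.init] using hsum' i'
      · rw [Fin.sum_univ_castSucc]
        simp only [Fin.snoc_castSucc, Fin.snoc_last, hul]
        abel
    · intro k l hkl z1 hz1 z2 hz2
      obtain ⟨k', rfl⟩ | rfl := Fin.eq_castSucc_or_eq_last k <;>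
        obtain ⟨l', rfl⟩ | rfl := Fin.eq_castSucc_or_eq_last l <;>
          simp only [Fin.snoc_castSucc, Fin.snoc_last] at hz1 hz2
      · refine horth' k' l' (fun h => hkl (by rw [h])) z1 hz1 z2 hz2
      · have hle := cyc_le_orth p π hp_star hp_mul hπ_mul hπ_star (hulorth k')
        exact (Submodule.mem_orthogonal _ _).1 (hle hz2) z1 hz1
      · have hle := cyc_le_orth p π hp_star hp_mul hπ_mul hπ_star (hulorth l')
        have h0 : (inner ℂ z2 z1 : ℂ) = 0 :=
          (Submodule.mem_orthogonal _ _).1 (hle hz1) z2 hz2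
        rw [← inner_conj_symm, h0, map_zero]
      · exact absurd rfl hkl

lemma posMatrix_star {n : ℕ} {a : Fin n → Fin n → A}
    (h : IsPosMatrix (Matrix.of a)) (i j : Fin n) : star (a j i) = a i j := by
  obtain ⟨k, B, hB⟩ := h
  rw [posMatrix_entry hB, posMatrix_entry hB]
  simp [star_sum, star_mul, star_star]

lemma herm_of_pos
    (hπ_star : ∀ a : A, p a < 1 → π (star a) = ContinuousLinearMap.adjoint (π a))
    {n : ℕ} {a : Fin n → Fin n → A} (ha : ∀ i j, p (a i j) < 1)
    (hpos : IsPosMatrix (Matrix.of a)) (v : H) :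
    (Matrix.of fun i j => (inner ℂ v (π (a i j) v) : ℂ)).IsHermitian := by
  rw [Matrix.IsHermitian]
  ext i j
  rw [Matrix.conjTranspose_apply, Matrix.of_apply, Matrix.of_apply]
  have h1 : π (a j i) = ContinuousLinearMap.adjoint (π (a i j)) := by
    have h2 := posMatrix_star hpos j i
    rw [← h2, hπ_star (a i j) (ha i j)]
  rw [h1, RCLike.star_def, inner_conj_symm, ContinuousLinearMap.adjoint_inner_left]

lemma isClosed_nonneg' : IsClosed {z : ℂ | 0 ≤ z} := by
  have hset : {z : ℂ | 0 ≤ z} = Complex.re ⁻¹' Set.Ici 0 ∩ Complex.im ⁻¹' {0} := by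
    ext z
    simp only [Set.mem_setOf_eq, Set.mem_inter_iff, Set.mem_preimage, Set.mem_Ici,
      Set.mem_singleton_iff, Complex.le_def, Complex.zero_re, Complex.zero_im]
    exact and_congr Iff.rfl eq_comm
  rw [hset]
  exact (isClosed_Ici.preimage Complex.continuous_re).inter
    (isClosed_singleton.preimage Complex.continuous_im)

lemma sum_swap4 {n : ℕ} (F : Fin n → Fin n → Fin n → Fin n → ℂ) :
    ∑ i, ∑ j, ∑ k, ∑ l, F i j k l = ∑ k, ∑ l, ∑ i, ∑ j, F i j k l := by
  calc ∑ i, ∑ j, ∑ k, ∑ l, F i j k l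
      = ∑ i, ∑ k, ∑ j, ∑ l, F i j k l :=
        Finset.sum_congr rfl fun i _ => Finset.sum_comm
    _ = ∑ k, ∑ i, ∑ j, ∑ l, F i j k l := Finset.sum_comm
    _ = ∑ k, ∑ i, ∑ l, ∑ j, F i j k l :=
        Finset.sum_congr rfl fun k _ => Finset.sum_congr rfl fun i _ => Finset.sum_comm
    _ = ∑ k, ∑ l, ∑ i, ∑ j, F i j k l :=
        Finset.sum_congr rfl fun k _ => Finset.sum_comm

end Rep

theorem representation_cp_iff_dense_vectors_cp
    {A : Type u} [NonUnitalRing A] [Module ℝ A] [SMulCommClass ℝ A A]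
    [IsScalarTower ℝ A A] [StarRing A] [StarModule ℝ A]
    -- (A, p) is a real seminormed involutive algebra:
    (p : Seminorm ℝ A)
    (hp_mul : ∀ a b : A, p (a * b) ≤ p a * p b)
    (hp_star : ∀ a : A, p (star a) = p a)
    {H : Type w} [NormedAddCommGroup H] [InnerProductSpace ℂ H] [CompleteSpace H]
    (π : A → (H →L[ℂ] H))
    -- π is a *-representation of ball(A,p):
    (hπ_mul : ∀ a b : A, p a < 1 → p b < 1 → π (a * b) = (π a).comp (π b))
    (hπ_star : ∀ a : A, p a < 1 → π (star a) = ContinuousLinearMap.adjoint (π a))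
    -- π is bounded on ball(A,p):
    (hbdd : ∃ M : ℝ, ∀ a : A, p a < 1 → ‖π a‖ ≤ M) :
    -- π is completely positive
    (∀ (n : ℕ) (a : Fin n → Fin n → A), (∀ i j, p (a i j) < 1) →
      IsPosMatrix (Matrix.of a) →
      ∀ w : Fin n → H, 0 ≤ ∑ i, ∑ j, (inner ℂ (w i) (π (a i j) (w j)) : ℂ)) ↔
    -- iff π^v is completely positive for all v in some dense subset D ⊆ H:
    (∃ D : Set H, Dense D ∧ ∀ v ∈ D,
      ∀ (n : ℕ) (a : Fin n → Fin n → A), (∀ i j, p (a i j) < 1) →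
        IsPosMatrix (Matrix.of a) →
        (Matrix.of fun i j => (inner ℂ v (π (a i j) v) : ℂ)).PosSemidef) := by
  constructor
  · intro hCP
    refine ⟨Set.univ, dense_univ, ?_⟩
    intro v _ n a ha hpos
    refine Matrix.PosSemidef.of_dotProduct_mulVec_nonneg (herm_of_pos p π hπ_star ha hpos v) ?_
    intro x
    have h := hCP n a ha hpos (fun i => x i • v)
    have heq : dotProduct (star x)
        ((Matrix.of fun i j => (inner ℂ v (π (a i j) v) : ℂ)) *ᵥ x) =
        ∑ i, ∑ j, (inner ℂ (x i • v) (π (a i j) (x j • v)) : ℂ) := by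
      simp only [dotProduct, Matrix.mulVec, Pi.star_apply, Matrix.of_apply,
        Finset.mul_sum, inner_smul_left, map_smul, inner_smul_right, RCLike.star_def]
      exact Finset.sum_congr rfl fun i _ => Finset.sum_congr rfl fun j _ => by ring
    rw [heq]
    exact h
  · rintro ⟨D, hD, hDcp⟩
    have hall : ∀ v : H, ∀ (N : ℕ) (b : Fin N → Fin N → A), (∀ I J, p (b I J) < 1) →
        IsPosMatrix (Matrix.of b) →
        (Matrix.of fun I J => (inner ℂ v (π (b I J) v) : ℂ)).PosSemidef := by
      intro v N b hb hbpos
      refine Matrix.PosSemidef.of_dotProduct_mulVec_nonneg (herm_of_pos p π hπ_star hb hbpos v) ?_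
      intro x
      set f : H → ℂ := fun v => dotProduct (star x)
        ((Matrix.of fun I J => (inner ℂ v (π (b I J) v) : ℂ)) *ᵥ x) with hf
      have hfc : Continuous f := by
        simp only [hf, dotProduct, Matrix.mulVec, Matrix.of_apply, Pi.star_apply]
        refine continuous_finset_sum _ fun i _ => Continuous.mul continuous_const ?_
        refine continuous_finset_sum _ fun j _ => Continuous.mul ?_ continuous_const
        exact Continuous.inner continuous_id ((π (b i j)).continuous)
      have hposf : Set.MapsTo f D {z : ℂ | 0 ≤ z} :=
        fun y hy => (hDcp y hy N b hb hbpos).dotProduct_mulVec_nonneg x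
      have hmem := map_mem_closure hfc (hD v) hposf
      rwa [isClosed_nonneg'.closure_eq] at hmem
    intro n a ha hpos w
    obtain ⟨u, y, hymem, hysum, horth⟩ :=
      exists_decomp p π hp_mul hp_star hπ_mul hπ_star n w
    have hexp : ∑ i, ∑ j, (inner ℂ (w i) (π (a i j) (w j)) : ℂ) =
        ∑ k, ∑ l, ∑ i, ∑ j, (inner ℂ (y i k) (π (a i j) (y j l)) : ℂ) := by
      rw [← sum_swap4 fun i j k l => (inner ℂ (y i k) (π (a i j) (y j l)) : ℂ)]
      refine Finset.sum_congr rfl fun i _ => Finset.sum_congr rfl fun j _ => ?_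
      rw [← hysum i, ← hysum j]
      simp only [map_sum, sum_inner, inner_sum]
      exact Finset.sum_comm
    rw [hexp]
    have hdiag : ∀ k, 0 ≤ ∑ i, ∑ j, (inner ℂ (y i k) (π (a i j) (y j k)) : ℂ) := fun k =>
      cyc_cp p π hp_mul hp_star hπ_mul hπ_star (u k) (hall (u k)) a ha hpos
        (fun i => y i k) (fun i => hymem i k)
    have hoff : ∀ k l, k ≠ l →
        ∑ i, ∑ j, (inner ℂ (y i k) (π (a i j) (y j l)) : ℂ) = 0 := by
      intro k l hkl
      refine Finset.sum_eq_zero fun i _ => Finset.sum_eq_zero fun j _ => ?_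
      exact horth k l hkl (y i k) (hymem i k) (π (a i j) (y j l))
        (cyc_invariant p π hp_mul hπ_mul (ha i j) (hymem j l))
    have hcollapse : ∑ k, ∑ l, ∑ i, ∑ j, (inner ℂ (y i k) (π (a i j) (y j l)) : ℂ) =
        ∑ k, ∑ i, ∑ j, (inner ℂ (y i k) (π (a i j) (y j k)) : ℂ) := by
      refine Finset.sum_congr rfl fun k _ => ?_
      refine Finset.sum_eq_single k (fun l _ hlk => hoff k l (Ne.symm hlk))
        (fun h => absurd (Finset.mem_univ k) h)
    rw [hcollapse]
    exact Finset.sum_nonneg fun k _ => hdiag k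
end
end

section
/- Let V be a complex Hilbert space and (Aₙ)_{n≥0} a sequence in B(V) such that for every t ∈ (0,1) the series φ(t) := ∑_{n≥0} tⁿ Aₙ converges in operator norm, suppose M := sup_{0<t<1} ‖φ(t)‖ < ∞, and suppose that φ : (0,1) → B(V) is positive definite on the *-semigroup ((0,1), ·) with trivial involution (i.e. ∑_{j,k} ⟨φ(sⱼ sₖ) vₖ, vⱼ⟩ ≥ 0 for all finite families sⱼ ∈ (0,1), vⱼ ∈ V). Then 0 ≤ Aₙ ≤ M·1 (as operators) for every n ≥ 0. -/
/- STATEMENT 13: Let `(Aₙ)` be a sequence in `B(V)` such that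
`φ(t) = ∑_{n≥0} tⁿ Aₙ` converges in operator norm for every `t ∈ (0,1)`, with
`‖φ(t)‖ ≤ M` on `(0,1)`, and suppose `φ` is positive definite on the *-semigroup
`((0,1), ·)` with trivial involution.  Then `0 ≤ Aₙ ≤ M·1` for every `n`. -/

open scoped ComplexOrder

noncomputable section

universe v

open Filter Finset Polynomial Topology

lemma geom_tail_le {x : ℝ} (h0 : 0 ≤ x) (h1 : x < 1) (m K : ℕ) :
    ∑ n ∈ Finset.Ico m K, x ^ n ≤ x ^ m * (1 - x)⁻¹ := by
  rw [Finset.sum_Ico_eq_sum_range]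
  have hcg : ∀ i ∈ Finset.range (K - m), x ^ (m + i) = x ^ m * x ^ i := fun i _ => pow_add x m i
  rw [Finset.sum_congr rfl hcg, ← Finset.mul_sum]
  have hx : 0 < 1 - x := by linarith
  have hgs : ∑ i ∈ Finset.range (K - m), x ^ i ≤ (1 - x)⁻¹ := by
    have hmul := geom_sum_mul x (K - m)
    have h2 : (∑ i ∈ Finset.range (K - m), x ^ i) * (1 - x) = 1 - x ^ (K - m) := by nlinarith
    rw [inv_eq_one_div, le_div_iff₀ hx, h2]
    have : (0:ℝ) ≤ x ^ (K - m) := by positivity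
    linarith
  exact mul_le_mul_of_nonneg_left hgs (by positivity)

noncomputable def pN (N : ℕ) : Polynomial ℝ := ∏ j ∈ Finset.range N, (X - C ((2:ℝ)⁻¹ ^ j))

lemma pN_natDegree (N : ℕ) : (pN N).natDegree = N := by
  rw [pN, Polynomial.natDegree_prod]
  · simp [Polynomial.natDegree_X_sub_C]
  · intro i _; exact X_sub_C_ne_zero _

lemma pN_eval_eq_sum (N : ℕ) (u : ℝ) :
    (pN N).eval u = ∑ j ∈ Finset.range (N+1), (pN N).coeff j * u ^ j := by
  exact Polynomial.eval_eq_sum_range' (by rw [pN_natDegree]; omega) u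

lemma pN_eval_prod (N : ℕ) (u : ℝ) :
    (pN N).eval u = ∏ j ∈ Finset.range N, (u - (2:ℝ)⁻¹ ^ j) := by
  simp [pN, Polynomial.eval_prod]

lemma pN_eval_zero (N n : ℕ) (hn : n < N) : (pN N).eval ((2:ℝ)⁻¹ ^ n) = 0 := by
  rw [pN_eval_prod]
  exact Finset.prod_eq_zero (Finset.mem_range.2 hn) (by ring)

lemma pN_eval_ne_zero (N : ℕ) : (pN N).eval ((2:ℝ)⁻¹ ^ N) ≠ 0 := by
  rw [pN_eval_prod]
  apply Finset.prod_ne_zero_iff.2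
  intro j hj
  have hlt : (2:ℝ)⁻¹ ^ N < (2:ℝ)⁻¹ ^ j :=
    pow_lt_pow_right_of_lt_one₀ (by norm_num) (by norm_num) (Finset.mem_range.1 hj)
  linarith

lemma pN_eval_abs_le (N : ℕ) (u : ℝ) (h0 : 0 ≤ u) (h1 : u ≤ 1) : |(pN N).eval u| ≤ 1 := by
  rw [pN_eval_prod, Finset.abs_prod]
  apply Finset.prod_le_one (fun j _ => abs_nonneg _)
  intro j _
  have h2 : (0:ℝ) < (2:ℝ)⁻¹ ^ j := by positivity
  have h3 : (2:ℝ)⁻¹ ^ j ≤ 1 := pow_le_one₀ (by norm_num) (by norm_num)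
  rw [abs_le]; constructor <;> linarith

lemma key_real (N : ℕ) (t : ℝ) (n : ℕ) :
    ∑ j ∈ Finset.range (N+1), ∑ k ∈ Finset.range (N+1),
      (pN N).coeff j * (pN N).coeff k * (t * (2:ℝ)⁻¹ ^ (j+k)) ^ n
    = t ^ n * ((pN N).eval ((2:ℝ)⁻¹ ^ n))^2 := by
  rw [pN_eval_eq_sum, sq, Finset.sum_mul_sum, Finset.mul_sum]
  apply Finset.sum_congr rfl; intro j _
  rw [Finset.mul_sum]
  apply Finset.sum_congr rfl; intro k _
  rw [mul_pow, ← pow_mul]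
  ring_nf

lemma key_complex (N : ℕ) (t : ℝ) (a : ℕ → ℂ) (K : ℕ) :
    ∑ j : Fin (N+1), ∑ k : Fin (N+1),
      (((pN N).coeff j : ℂ) * ((pN N).coeff k : ℂ)) *
        (∑ n ∈ Finset.range K, (((t * (2:ℝ)⁻¹ ^ ((j:ℕ)+(k:ℕ)))^n : ℝ) : ℂ) * a n)
    = ∑ n ∈ Finset.range K, ((t^n : ℝ) : ℂ) * a n
        * ((((pN N).eval ((2:ℝ)⁻¹^n))^2 : ℝ) : ℂ) := by
  rw [Fin.sum_univ_eq_sum_range (fun j => ∑ k : Fin (N+1),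
      (((pN N).coeff j : ℂ) * ((pN N).coeff (k:ℕ) : ℂ)) *
        (∑ n ∈ Finset.range K, (((t * (2:ℝ)⁻¹ ^ (j+(k:ℕ)))^n : ℝ) : ℂ) * a n))]
  have hin : ∀ j, (∑ k : Fin (N+1),
      (((pN N).coeff j : ℂ) * ((pN N).coeff (k:ℕ) : ℂ)) *
        (∑ n ∈ Finset.range K, (((t * (2:ℝ)⁻¹ ^ (j+(k:ℕ)))^n : ℝ) : ℂ) * a n))
      = ∑ k ∈ Finset.range (N+1),
      (((pN N).coeff j : ℂ) * ((pN N).coeff k : ℂ)) *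
        (∑ n ∈ Finset.range K, (((t * (2:ℝ)⁻¹ ^ (j+k))^n : ℝ) : ℂ) * a n) := by
    intro j
    exact Fin.sum_univ_eq_sum_range (fun k => (((pN N).coeff j : ℂ) * ((pN N).coeff k : ℂ)) *
        (∑ n ∈ Finset.range K, (((t * (2:ℝ)⁻¹ ^ (j+k))^n : ℝ) : ℂ) * a n)) (N+1)
  simp only [hin]
  simp only [Finset.mul_sum]
  have swap1 : ∀ j ∈ Finset.range (N+1), (∑ k ∈ Finset.range (N+1), ∑ n ∈ Finset.range K,
      ((pN N).coeff j : ℂ) * ((pN N).coeff k : ℂ) * ((((t * (2:ℝ)⁻¹ ^ (j+k))^n : ℝ) : ℂ) * a n))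
      = ∑ n ∈ Finset.range K, ∑ k ∈ Finset.range (N+1),
      ((pN N).coeff j : ℂ) * ((pN N).coeff k : ℂ) * ((((t * (2:ℝ)⁻¹ ^ (j+k))^n : ℝ) : ℂ) * a n) :=
    fun j _ => Finset.sum_comm
  rw [Finset.sum_congr rfl swap1, Finset.sum_comm]
  refine Finset.sum_congr rfl (fun n _ => ?_)
  have hfac : ∑ j ∈ Finset.range (N+1), ∑ k ∈ Finset.range (N+1),
      ((pN N).coeff j : ℂ) * ((pN N).coeff k : ℂ) * ((((t * (2:ℝ)⁻¹ ^ (j+k))^n : ℝ) : ℂ) * a n)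
      = ((∑ j ∈ Finset.range (N+1), ∑ k ∈ Finset.range (N+1),
          (pN N).coeff j * (pN N).coeff k * (t * (2:ℝ)⁻¹ ^ (j+k)) ^ n : ℝ) : ℂ) * a n := by
    push_cast
    rw [Finset.sum_mul]
    refine Finset.sum_congr rfl (fun j _ => ?_)
    rw [Finset.sum_mul]
    refine Finset.sum_congr rfl (fun k _ => ?_)
    ring
  rw [hfac, key_real]
  push_cast
  ring

theorem pd_scalar (a : ℕ → ℂ) (f : ℝ → ℂ) (Mv : ℝ)
    (h1 : ∀ t : ℝ, 0 < t → t < 1 →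
      Tendsto (fun K : ℕ => ∑ n ∈ Finset.range K, ((t ^ n : ℝ) : ℂ) * a n) atTop (nhds (f t)))
    (h2 : ∀ t : ℝ, 0 < t → t < 1 → ‖f t‖ ≤ Mv)
    (h3 : ∀ (m : ℕ) (s : Fin m → ℝ), (∀ j, 0 < s j ∧ s j < 1) →
      ∀ c : Fin m → ℝ, 0 ≤ ∑ j, ∑ k, ((c j : ℂ) * (c k : ℂ)) * f (s j * s k)) :
    ∀ n, 0 ≤ a n ∧ (a n).re ≤ Mv := by
  -- Step 0 : coefficient bound
  obtain ⟨C, hC0, hC⟩ : ∃ C : ℝ, 0 ≤ C ∧ ∀ n, ‖a n‖ ≤ C * (4/3)^n := by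
    have h34 := h1 (3/4) (by norm_num) (by norm_num)
    have hterm : Tendsto (fun n : ℕ => (((3/4:ℝ)^n : ℝ) : ℂ) * a n) atTop (𝓝 0) := by
      have h' := (h34.comp (tendsto_add_atTop_nat 1)).sub h34
      rw [sub_self] at h'
      refine h'.congr (fun K => ?_)
      simp only [Function.comp]
      rw [Finset.sum_range_succ]
      ring
    have hb := hterm.norm.bddAbove_range
    obtain ⟨C, hC⟩ := hb
    refine ⟨max C 0, le_max_right _ _, fun n => ?_⟩
    have hn0 : ‖(((3/4:ℝ)^n : ℝ) : ℂ) * a n‖ ≤ C := hC ⟨n, rfl⟩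
    have hn : ((3:ℝ)/4)^n * ‖a n‖ ≤ C := by
      rw [← abs_of_nonneg (show (0:ℝ) ≤ (3/4:ℝ)^n by positivity), ← Real.norm_eq_abs,
        ← Complex.norm_real, ← norm_mul]
      exact hn0
    have hkey : ((3:ℝ)/4)^n * ((4:ℝ)/3)^n = 1 := by
      rw [← mul_pow]; norm_num
    calc ‖a n‖ = (((3:ℝ)/4)^n * ((4:ℝ)/3)^n) * ‖a n‖ := by rw [hkey, one_mul]
      _ = ((3/4:ℝ)^n * ‖a n‖) * (4/3)^n := by ring
      _ ≤ C * (4/3)^n := by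
          apply mul_le_mul_of_nonneg_right hn (by positivity)
      _ ≤ max C 0 * (4/3)^n := by
          apply mul_le_mul_of_nonneg_right (le_max_left _ _) (by positivity)
  -- Step 1 : positivity of each coefficient
  have hpos : ∀ N, 0 ≤ a N := by
    intro N
    set q : ℝ := (2:ℝ)⁻¹ with hq
    set c : ℕ → ℝ := fun j => (pN N).coeff j with hc
    set e : ℕ → ℝ := fun n => ((pN N).eval (q^n))^2 with he
    set S : ℝ → ℂ := fun t => ∑ j : Fin (N+1), ∑ k : Fin (N+1),
      ((c (j:ℕ) : ℂ) * (c (k:ℕ) : ℂ)) * f (t * q^((j:ℕ)+(k:ℕ))) with hS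
    have hq0 : (0:ℝ) < q := by norm_num [hq]
    have hq1 : q < 1 := by norm_num [hq]
    -- S is nonnegative
    have hSpos : ∀ t : ℝ, 0 < t → t < 1 → 0 ≤ S t := by
      intro t ht0 ht1
      have hs : ∀ j : Fin (N+1), 0 < Real.sqrt t * q^(j:ℕ) ∧ Real.sqrt t * q^(j:ℕ) < 1 := by
        intro j
        constructor
        · exact mul_pos (Real.sqrt_pos.2 ht0) (by positivity)
        · have h1' : Real.sqrt t < 1 := by
            rw [Real.sqrt_lt' one_pos]; norm_num; exact ht1
          have h2' : q^(j:ℕ) ≤ 1 := pow_le_one₀ hq0.le hq1.le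
          calc Real.sqrt t * q^(j:ℕ) ≤ Real.sqrt t * 1 :=
                mul_le_mul_of_nonneg_left h2' (Real.sqrt_nonneg t)
            _ < 1 := by rwa [mul_one]
      have hpd0 := h3 (N+1) (fun j => Real.sqrt t * q^(j:ℕ)) hs (fun j => c (j:ℕ))
      have heq : S t = ∑ j : Fin (N+1), ∑ k : Fin (N+1),
          ((c (j:ℕ) : ℂ) * (c (k:ℕ) : ℂ)) * f (Real.sqrt t * q^(j:ℕ) * (Real.sqrt t * q^(k:ℕ))) := by
        rw [hS]
        refine Finset.sum_congr rfl (fun j _ => Finset.sum_congr rfl (fun k _ => ?_))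
        set st := Real.sqrt t with hst
        have hss : st * st = t := Real.mul_self_sqrt ht0.le
        have harg : t * q^((j:ℕ)+(k:ℕ)) = st * q^(j:ℕ) * (st * q^(k:ℕ)) := by
          rw [← hss, pow_add]; ring
        rw [harg]
      rw [heq]
      exact hpd0
    -- partial sums converge to S t
    have hSlim : ∀ t : ℝ, 0 < t → t < 1 →
        Tendsto (fun K : ℕ => ∑ n ∈ Finset.range K, ((t^n : ℝ) : ℂ) * a n * ((e n : ℝ) : ℂ))
          atTop (𝓝 (S t)) := by
      intro t ht0 ht1
      have hkc : ∀ K : ℕ, ∑ n ∈ Finset.range K, ((t^n : ℝ) : ℂ) * a n * ((e n : ℝ) : ℂ)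
          = ∑ j : Fin (N+1), ∑ k : Fin (N+1),
            ((c (j:ℕ) : ℂ) * (c (k:ℕ) : ℂ)) *
              (∑ n ∈ Finset.range K, (((t * q^((j:ℕ)+(k:ℕ)))^n : ℝ) : ℂ) * a n) :=
        fun K => (key_complex N t a K).symm
      rw [show (𝓝 (S t)) = (𝓝 (S t)) from rfl]
      refine Tendsto.congr (fun K => (hkc K).symm) ?_
      rw [hS]
      refine tendsto_finset_sum _ (fun j _ => tendsto_finset_sum _ (fun k _ => ?_))
      have hprod0 : 0 < t * q^((j:ℕ)+(k:ℕ)) := by positivity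
      have hprod1 : t * q^((j:ℕ)+(k:ℕ)) < 1 := by
        have : q^((j:ℕ)+(k:ℕ)) ≤ 1 := pow_le_one₀ hq0.le hq1.le
        calc t * q^((j:ℕ)+(k:ℕ)) ≤ t * 1 := mul_le_mul_of_nonneg_left this ht0.le
          _ < 1 := by rwa [mul_one]
      exact (h1 _ hprod0 hprod1).const_mul _
    -- basic facts about e
    have heN0 : 0 < e N := by
      have hne := pN_eval_ne_zero N
      exact lt_of_le_of_ne (sq_nonneg _) (Ne.symm (pow_ne_zero 2 hne))
    have heBound : ∀ n, 0 ≤ e n ∧ e n ≤ 1 := by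
      intro n
      refine ⟨sq_nonneg _, ?_⟩
      have habs := pN_eval_abs_le N (q^n) (by positivity) (pow_le_one₀ hq0.le hq1.le)
      calc e n = |(pN N).eval (q^n)|^2 := (sq_abs _).symm
        _ ≤ 1^2 := by apply pow_le_pow_left₀ (abs_nonneg _) habs
        _ = 1 := one_pow 2
    set D : ℝ := 3 * C * (4/3)^(N+1) with hD
    -- quantitative bound on S near 0
    have hDbound : ∀ t : ℝ, 0 < t → t ≤ 1/2 →
        ‖S t - ((t^N * e N : ℝ) : ℂ) * a N‖ ≤ D * t^(N+1) := by
      intro t ht0 ht12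
      have ht1 : t < 1 := by linarith
      set main : ℂ := ((t^N * e N : ℝ) : ℂ) * a N with hmain
      have hK : ∀ K, N+1 ≤ K →
          ‖(∑ n ∈ Finset.range K, ((t^n : ℝ) : ℂ) * a n * ((e n : ℝ) : ℂ)) - main‖
            ≤ D * t^(N+1) := by
        intro K hKN
        have hsplit : ∑ n ∈ Finset.range K, ((t^n : ℝ) : ℂ) * a n * ((e n : ℝ) : ℂ)
            = (∑ n ∈ Finset.range (N+1), ((t^n : ℝ) : ℂ) * a n * ((e n : ℝ) : ℂ))
              + ∑ n ∈ Finset.Ico (N+1) K, ((t^n : ℝ) : ℂ) * a n * ((e n : ℝ) : ℂ) :=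
          (Finset.sum_range_add_sum_Ico _ hKN).symm
        have hhead : ∑ n ∈ Finset.range (N+1), ((t^n : ℝ) : ℂ) * a n * ((e n : ℝ) : ℂ)
            = main := by
          rw [Finset.sum_range_succ]
          have hz : ∑ n ∈ Finset.range N, ((t^n : ℝ) : ℂ) * a n * ((e n : ℝ) : ℂ) = 0 := by
            apply Finset.sum_eq_zero
            intro n hn
            have hzero : e n = 0 := by
              rw [he]; simp only
              rw [pN_eval_zero N n (Finset.mem_range.1 hn)]; ring
            rw [hzero]; push_cast; ring
          rw [hz, zero_add, hmain]; push_cast; ring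
        rw [hsplit, hhead, add_sub_cancel_left]
        calc ‖∑ n ∈ Finset.Ico (N+1) K, ((t^n : ℝ) : ℂ) * a n * ((e n : ℝ) : ℂ)‖
            ≤ ∑ n ∈ Finset.Ico (N+1) K, ‖((t^n : ℝ) : ℂ) * a n * ((e n : ℝ) : ℂ)‖ :=
              norm_sum_le _ _
          _ ≤ ∑ n ∈ Finset.Ico (N+1) K, C * (4/3*t)^n := by
              apply Finset.sum_le_sum
              intro n _
              rw [norm_mul, norm_mul, Complex.norm_real, Complex.norm_real,
                Real.norm_eq_abs, Real.norm_eq_abs,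
                abs_of_nonneg (show (0:ℝ) ≤ t^n by positivity), abs_of_nonneg (heBound n).1]
              calc t^n * ‖a n‖ * e n ≤ t^n * (C * (4/3)^n) * 1 := by
                    apply mul_le_mul
                      (mul_le_mul_of_nonneg_left (hC n) (by positivity))
                      (heBound n).2 (heBound n).1 (by positivity)
                _ = C * (4/3*t)^n := by rw [mul_pow]; ring
          _ = C * ∑ n ∈ Finset.Ico (N+1) K, (4/3*t)^n := by rw [Finset.mul_sum]
          _ ≤ C * ((4/3*t)^(N+1) * (1 - 4/3*t)⁻¹) :=
              mul_le_mul_of_nonneg_left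
                (geom_tail_le (by positivity) (by linarith) _ _) hC0
          _ ≤ D * t^(N+1) := by
              have hinv : (1 - 4/3*t)⁻¹ ≤ 3 := by
                have h13 : (1:ℝ)/3 ≤ 1 - 4/3*t := by linarith
                calc (1 - 4/3*t)⁻¹ ≤ ((1:ℝ)/3)⁻¹ := inv_anti₀ (by norm_num) h13
                  _ = 3 := by norm_num
              have hxp : ((4:ℝ)/3*t)^(N+1) = (4/3:ℝ)^(N+1) * t^(N+1) := by rw [mul_pow]
              rw [hD, hxp]
              have h0 : (0:ℝ) ≤ (4/3:ℝ)^(N+1) * t^(N+1) := by positivity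
              calc C * ((4/3:ℝ)^(N+1) * t^(N+1) * (1 - 4/3*t)⁻¹)
                  ≤ C * ((4/3:ℝ)^(N+1) * t^(N+1) * 3) :=
                    mul_le_mul_of_nonneg_left (mul_le_mul_of_nonneg_left hinv h0) hC0
                _ = 3 * C * (4/3:ℝ)^(N+1) * t^(N+1) := by ring
      have hnlim : Tendsto
          (fun K => ‖(∑ n ∈ Finset.range K, ((t^n:ℝ):ℂ) * a n * ((e n:ℝ):ℂ)) - main‖)
          atTop (𝓝 ‖S t - main‖) :=
        (((hSlim t ht0 ht1).sub tendsto_const_nhds)).norm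
      exact le_of_tendsto hnlim (Filter.eventually_atTop.2 ⟨N+1, hK⟩)
    -- extract the coefficient via t → 0
    set ts : ℕ → ℝ := fun i => (2:ℝ)⁻¹^(i+1) with hts
    have hts0 : ∀ i, 0 < ts i := fun i => by positivity
    have hts12 : ∀ i, ts i ≤ 1/2 := by
      intro i
      calc ts i ≤ (2:ℝ)⁻¹^1 := pow_le_pow_of_le_one (by norm_num) (by norm_num) (by omega)
        _ = 1/2 := by norm_num
    have hts1 : ∀ i, ts i < 1 := fun i => lt_of_le_of_lt (hts12 i) (by norm_num)
    set u : ℕ → ℂ := fun i => ((((ts i)^N)⁻¹ : ℝ) : ℂ) * S (ts i) with hu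
    set α : ℂ := ((e N : ℝ) : ℂ) * a N with hα
    have hulim : Tendsto u atTop (𝓝 α) := by
      rw [tendsto_iff_norm_sub_tendsto_zero]
      have hb : ∀ i, ‖u i - α‖ ≤ D * ts i := by
        intro i
        have htn : ((ts i)^N : ℝ) ≠ 0 := by positivity
        have hdiff : u i - α
            = ((((ts i)^N)⁻¹ : ℝ) : ℂ) * (S (ts i) - (((ts i)^N * e N : ℝ) : ℂ) * a N) := by
          rw [hu, hα]; simp only
          push_cast
          have htc : ((ts i : ℂ))^N * ((ts i : ℂ))⁻¹^N = 1 := by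
            rw [← mul_pow, mul_inv_cancel₀ (by exact_mod_cast (hts0 i).ne'), one_pow]
          linear_combination ((e N : ℂ) * a N) * htc
        rw [hdiff, norm_mul, Complex.norm_real, Real.norm_eq_abs,
          abs_of_nonneg (show (0:ℝ) ≤ ((ts i)^N)⁻¹ by positivity)]
        calc ((ts i)^N)⁻¹ * ‖S (ts i) - (((ts i)^N * e N : ℝ) : ℂ) * a N‖
            ≤ ((ts i)^N)⁻¹ * (D * (ts i)^(N+1)) :=
              mul_le_mul_of_nonneg_left (hDbound (ts i) (hts0 i) (hts12 i)) (by positivity)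
          _ = D * ts i := by rw [pow_succ]; field_simp
      have hD0 : Tendsto (fun i : ℕ => D * ts i) atTop (𝓝 0) := by
        have h2 : Tendsto (fun i : ℕ => (2:ℝ)⁻¹^i) atTop (𝓝 0) :=
          tendsto_pow_atTop_nhds_zero_of_lt_one (by norm_num) (by norm_num)
        have h3' : Tendsto ts atTop (𝓝 0) := by
          rw [hts]
          have := h2.comp (tendsto_add_atTop_nat 1)
          simpa [Function.comp_def] using this
        have h4 := h3'.const_mul D
        rw [mul_zero] at h4
        exact h4
      exact squeeze_zero (fun i => norm_nonneg _) hb hD0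
    have hSim : ∀ i, (u i).im = 0 ∧ 0 ≤ (u i).re := by
      intro i
      have h0S := hSpos (ts i) (hts0 i) (hts1 i)
      rw [Complex.le_def] at h0S
      obtain ⟨hr, hi⟩ := h0S
      simp only [Complex.zero_re, Complex.zero_im] at hr hi
      constructor
      · rw [hu]; simp only
        simp only [Complex.mul_im, Complex.ofReal_re, Complex.ofReal_im, zero_mul, add_zero]
        rw [← hi, mul_zero]
      · rw [hu]; simp only
        simp only [Complex.mul_re, Complex.ofReal_re, Complex.ofReal_im, zero_mul, sub_zero]
        exact mul_nonneg (by positivity) hr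
    have hαim : α.im = 0 := by
      have h1lim : Tendsto (fun i => (u i).im) atTop (𝓝 α.im) :=
        (Complex.continuous_im.tendsto α).comp hulim
      have hconst : Tendsto (fun _ : ℕ => (0:ℝ)) atTop (𝓝 α.im) :=
        h1lim.congr (fun i => (hSim i).1)
      exact tendsto_nhds_unique hconst tendsto_const_nhds
    have hαre : 0 ≤ α.re :=
      ge_of_tendsto ((Complex.continuous_re.tendsto α).comp hulim)
        (Filter.Eventually.of_forall (fun i => (hSim i).2))
    have hαim' : α.im = e N * (a N).im := by
      rw [hα]; simp [Complex.mul_im]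
    have hαre' : α.re = e N * (a N).re := by
      rw [hα]; simp [Complex.mul_re]
    rw [Complex.le_def]
    constructor
    · rw [Complex.zero_re]
      nlinarith [hαre, hαre', heN0]
    · rw [Complex.zero_im]
      have : e N * (a N).im = 0 := by rw [← hαim', hαim]
      have := mul_eq_zero.1 this
      rcases this with h | h
      · exact absurd h heN0.ne'
      · exact h.symm
  -- Step 2 : upper bound
  intro n
  refine ⟨hpos n, ?_⟩
  have hrepos : ∀ m, 0 ≤ (a m).re := by
    intro m
    have := hpos m
    rw [Complex.le_def] at this
    simpa using this.1
  have hbound : ∀ t : ℝ, 0 < t → t < 1 → t^n * (a n).re ≤ Mv := by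
    intro t ht0 ht1
    have hrelim : Tendsto (fun K => (∑ m ∈ Finset.range K, ((t^m:ℝ):ℂ) * a m).re)
        atTop (𝓝 ((f t).re)) := (Complex.continuous_re.tendsto _).comp (h1 t ht0 ht1)
    have hge : t^n * (a n).re ≤ (f t).re := by
      apply ge_of_tendsto hrelim
      rw [eventually_atTop]
      refine ⟨n+1, fun K hK => ?_⟩
      have hre_sum : (∑ m ∈ Finset.range K, ((t^m:ℝ):ℂ) * a m).re
          = ∑ m ∈ Finset.range K, t^m * (a m).re := by
        rw [Complex.re_sum]
        refine Finset.sum_congr rfl (fun m _ => ?_)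
        simp [Complex.mul_re, ← Complex.ofReal_pow]
      rw [hre_sum]
      exact Finset.single_le_sum (f := fun m => t^m * (a m).re)
        (fun m _ => mul_nonneg (by positivity) (hrepos m)) (Finset.mem_range.2 (by omega))
    have hfle : (f t).re ≤ Mv := by
      have := h2 t ht0 ht1
      have hra := Complex.re_le_norm (f t)
      linarith
    linarith
  set ts : ℕ → ℝ := fun i => 1 - 1/((i:ℝ)+2) with hts
  have hts01 : ∀ i : ℕ, 0 < ts i ∧ ts i < 1 := by
    intro i
    have hi0 : (0:ℝ) ≤ (i:ℝ) := Nat.cast_nonneg i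
    have h2 : (2:ℝ) ≤ (i:ℝ)+2 := by linarith
    have hp : 0 < 1/((i:ℝ)+2) := by positivity
    have hle : 1/((i:ℝ)+2) ≤ 1/2 := by
      apply one_div_le_one_div_of_le (by norm_num) h2
    constructor
    · rw [hts]; simp only; linarith
    · rw [hts]; simp only; linarith
  have hlim1 : Tendsto (fun i : ℕ => (ts i)^n * (a n).re) atTop (𝓝 ((a n).re)) := by
    have h0 : Tendsto (fun i : ℕ => 1/((i:ℝ)+2)) atTop (𝓝 0) := by
      have := (tendsto_one_div_add_atTop_nhds_zero_nat (𝕜 := ℝ)).comp (tendsto_add_atTop_nat 1)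
      refine this.congr (fun i => ?_)
      simp [Function.comp]
      push_cast
      ring
    have hts_lim : Tendsto ts atTop (𝓝 1) := by
      rw [hts]
      have hc1 : Tendsto (fun i : ℕ => 1 - 1/((i:ℝ)+2)) atTop (𝓝 (1 - 0)) :=
        tendsto_const_nhds.sub h0
      simpa using hc1
    have := (hts_lim.pow n).mul_const ((a n).re)
    simpa using this
  exact le_of_tendsto hlim1
    (Filter.Eventually.of_forall (fun i => hbound (ts i) (hts01 i).1 (hts01 i).2))

lemma isPositive_of_inner_nonneg {V : Type*} [NormedAddCommGroup V] [InnerProductSpace ℂ V]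
    [CompleteSpace V] (T : V →L[ℂ] V) (h : ∀ x : V, 0 ≤ (inner ℂ x (T x) : ℂ)) :
    T.IsPositive := by
  rw [ContinuousLinearMap.isPositive_iff_complex]
  intro x
  have hx := h x
  rw [Complex.le_def] at hx
  simp only [Complex.zero_re, Complex.zero_im] at hx
  have hconj : (inner ℂ (T x) x : ℂ) = (starRingEnd ℂ) (inner ℂ x (T x)) :=
    (inner_conj_symm (T x) x).symm
  have him : (inner ℂ x (T x) : ℂ).im = 0 := hx.2.symm
  constructor
  · apply Complex.ext
    · rw [RCLike.re_to_complex, Complex.ofReal_re]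
    · rw [RCLike.re_to_complex, Complex.ofReal_im, hconj, Complex.conj_im, him, neg_zero]
  · rw [RCLike.re_to_complex, hconj, Complex.conj_re]
    exact hx.1


theorem coefficients_of_pd_power_series_bounded
    {V : Type v} [NormedAddCommGroup V] [InnerProductSpace ℂ V] [CompleteSpace V]
    (A : ℕ → (V →L[ℂ] V)) (φ : ℝ → (V →L[ℂ] V)) (M : ℝ)
    -- the series ∑ tⁿ Aₙ converges in operator norm to φ(t) for t ∈ (0,1):
    (hconv : ∀ t : ℝ, 0 < t → t < 1 →
      Filter.Tendsto (fun N : ℕ => ∑ n ∈ Finset.range N, ((t ^ n : ℝ) : ℂ) • A n)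
        Filter.atTop (nhds (φ t)))
    -- M bounds ‖φ‖ on (0,1):
    (hM : ∀ t : ℝ, 0 < t → t < 1 → ‖φ t‖ ≤ M)
    -- φ is positive definite on ((0,1), ·) with trivial involution:
    (hpd : ∀ (m : ℕ) (s : Fin m → ℝ), (∀ j, 0 < s j ∧ s j < 1) →
      ∀ v : Fin m → V,
        0 ≤ ∑ j, ∑ k, (inner ℂ (v j) (φ (s j * s k) (v k)) : ℂ)) :
    -- then 0 ≤ Aₙ ≤ M·1 for every n:
    ∀ n : ℕ, (A n).IsPositive ∧
      (((M : ℂ) • (1 : V →L[ℂ] V)) - A n).IsPositive := by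
  intro n
  have key : ∀ w : V, 0 ≤ (inner ℂ w (A n w) : ℂ) ∧ ((inner ℂ w (A n w) : ℂ)).re ≤ M * ‖w‖^2 := by
    intro w
    set a : ℕ → ℂ := fun m => inner ℂ w (A m w) with ha
    set f : ℝ → ℂ := fun t => inner ℂ w (φ t w) with hf
    have h1 : ∀ t : ℝ, 0 < t → t < 1 →
        Tendsto (fun K : ℕ => ∑ m ∈ Finset.range K, ((t ^ m : ℝ) : ℂ) * a m)
          atTop (𝓝 (f t)) := by
      intro t ht0 ht1
      have happ : Tendsto (fun K : ℕ => (∑ m ∈ Finset.range K, ((t ^ m : ℝ) : ℂ) • A m) w)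
          atTop (𝓝 (φ t w)) :=
        ((ContinuousLinearMap.apply ℂ V w).continuous.tendsto _).comp (hconv t ht0 ht1)
      have hcont : Continuous (fun y : V => (inner ℂ w y : ℂ)) :=
        continuous_const.inner continuous_id
      have hin : Tendsto
          (fun K : ℕ => (inner ℂ w ((∑ m ∈ Finset.range K, ((t ^ m : ℝ) : ℂ) • A m) w) : ℂ))
          atTop (𝓝 (inner ℂ w (φ t w))) := (hcont.tendsto _).comp happ
      refine hin.congr (fun K => ?_)
      rw [ContinuousLinearMap.sum_apply, inner_sum]
      refine Finset.sum_congr rfl (fun m _ => ?_)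
      rw [ContinuousLinearMap.smul_apply, inner_smul_right]
    have h2 : ∀ t : ℝ, 0 < t → t < 1 → ‖f t‖ ≤ M * ‖w‖^2 := by
      intro t ht0 ht1
      have hMt := hM t ht0 ht1
      have hnn : (0:ℝ) ≤ ‖w‖ := norm_nonneg w
      calc ‖f t‖ ≤ ‖w‖ * ‖φ t w‖ := norm_inner_le_norm _ _
        _ ≤ ‖w‖ * (‖φ t‖ * ‖w‖) :=
            mul_le_mul_of_nonneg_left ((φ t).le_opNorm w) hnn
        _ ≤ M * ‖w‖^2 := by nlinarith [(φ t).opNorm_nonneg]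
    have h3 : ∀ (m : ℕ) (s : Fin m → ℝ), (∀ j, 0 < s j ∧ s j < 1) →
        ∀ c : Fin m → ℝ, 0 ≤ ∑ j, ∑ k, ((c j : ℂ) * (c k : ℂ)) * f (s j * s k) := by
      intro m s hs c
      have hp := hpd m s hs (fun j => ((c j : ℝ) : ℂ) • w)
      refine le_of_le_of_eq hp
        (Finset.sum_congr rfl (fun j _ => Finset.sum_congr rfl (fun k _ => ?_)))
      rw [map_smul, inner_smul_left, inner_smul_right, Complex.conj_ofReal]
      rw [hf]; ring
    exact pd_scalar a f (M * ‖w‖^2) h1 h2 h3 n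
  constructor
  · exact isPositive_of_inner_nonneg _ (fun x => (key x).1)
  · apply isPositive_of_inner_nonneg
    intro x
    have hx := key x
    have hval : (inner ℂ x ((((M : ℂ) • (1 : V →L[ℂ] V)) - A n) x) : ℂ)
        = ((M * ‖x‖^2 : ℝ) : ℂ) - inner ℂ x (A n x) := by
      rw [ContinuousLinearMap.sub_apply, inner_sub_right, ContinuousLinearMap.smul_apply,
        ContinuousLinearMap.one_apply, inner_smul_right, inner_self_eq_norm_sq_to_K]
      push_cast
      rfl
    rw [hval, Complex.le_def]
    rw [Complex.le_def] at hx
    obtain ⟨⟨hre, him⟩, hub⟩ := hx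
    simp only [Complex.zero_re, Complex.zero_im] at hre him ⊢
    constructor
    · simp only [Complex.sub_re, Complex.ofReal_re]
      linarith
    · simp only [Complex.sub_im, Complex.ofReal_im]
      simp [← him]
end
end

section
/- Let S be a structured *-semigroup with structure homomorphism γ, let T ⊆ S be a subsemigroup closed under the involution and satisfying γ(r)T ⊆ T for all 0 < r < 1, and let V be a complex Hilbert space. For each integer n ≥ 0, let φₙ : T → B(V) be homogeneous of degree n (φₙ(γ(r)a) = rⁿ φₙ(a) for a ∈ T, 0 < r < 1), and assume that for every a ∈ T the series φ(a) := ∑_{n≥0} φₙ(a) converges in the weak operator topology (i.e. ∑ₙ ⟨φₙ(a)v, w⟩ converges to ⟨φ(a)v, w⟩ for all v, w ∈ V) and that M := sup_{a ∈ T} ‖φ(aa*)‖ < ∞. Then φ is positive definite on T if and only if every φₙ is positive definite on T; and in that case sup_{a ∈ T} ‖φₙ(aa*)‖ ≤ M for every n ≥ 0. -/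
/- STATEMENT 15: Let `S` be a structured *-semigroup with structure homomorphism
`γ`, `T ⊆ S` a *-subsemigroup with `γ(r)T ⊆ T` for `0 < r < 1`, and `φₙ : T → B(V)`
homogeneous of degree `n`, such that `φ(a) = ∑ₙ φₙ(a)` converges in the weak
operator topology for `a ∈ T` and `M := sup_{a ∈ T} ‖φ(aa*)‖ < ∞.  Then `φ` is
positive definite on `T` iff every `φₙ` is, and in that case
`‖φₙ(aa*)‖ ≤ M` for all `n` and `a ∈ T`. -/

open scoped ComplexOrder

set_option maxHeartbeats 1000000

noncomputable section

universe u v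

/-- Positive definiteness of a `B(V)`-valued function on a subset `T` of a
*-semigroup. -/
def IsPosDefOn {S : Type u} [Monoid S] [StarMul S] (T : Set S)
    {V : Type v} [NormedAddCommGroup V] [InnerProductSpace ℂ V]
    (ψ : S → (V →L[ℂ] V)) : Prop :=
  ∀ (m : ℕ) (s : Fin m → S), (∀ j, s j ∈ T) →
    ∀ v : Fin m → V,
      0 ≤ ∑ j, ∑ k, (inner ℂ (v j) (ψ (star (s j) * s k) (v k)) : ℂ)

section Helpers

open Filter Topology Polynomial

/-- A limit of nonnegative complex numbers is nonnegative. -/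
lemma nonneg_lim_of_nonneg {f : ℕ → ℂ} {z : ℂ}
    (h : Tendsto f atTop (nhds z))
    (h0 : ∀ᶠ N in atTop, 0 ≤ f N) : 0 ≤ z := by
  rw [Complex.nonneg_iff]
  constructor
  · exact ge_of_tendsto ((Complex.continuous_re.tendsto z).comp h)
      (h0.mono fun N hN => (Complex.nonneg_iff.mp hN).1)
  · exact tendsto_nhds_unique
      (tendsto_congr' (h0.mono fun N hN => ((Complex.nonneg_iff.mp hN).2).symm)
        |>.mpr tendsto_const_nhds)
      ((Complex.continuous_im.tendsto z).comp h) |>.symm ▸ rfl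

/-- An operator with a nonnegative quadratic form bounded by `M ‖v‖²` has norm `≤ M`. -/
lemma norm_le_of_posform {V : Type*} [NormedAddCommGroup V] [InnerProductSpace ℂ V]
    {P : V →L[ℂ] V} {M : ℝ} (hM : 0 ≤ M)
    (hq : ∀ v : V, 0 ≤ (inner ℂ v (P v) : ℂ))
    (hb : ∀ v : V, (inner ℂ v (P v) : ℂ).re ≤ M * ‖v‖ ^ 2) : ‖P‖ ≤ M := by
  have hreal : ∀ v : V, (starRingEnd ℂ) (inner ℂ (P v) v : ℂ) = (inner ℂ (P v) v : ℂ) := by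
    intro v
    have h1 : (inner ℂ (P v) v : ℂ) = (starRingEnd ℂ) (inner ℂ v (P v) : ℂ) :=
      (inner_conj_symm _ _).symm
    have h2 : (inner ℂ v (P v) : ℂ).im = 0 := ((Complex.nonneg_iff.mp (hq v)).2).symm
    rw [h1, Complex.conj_conj]
    exact (Complex.conj_eq_iff_im.mpr h2).symm
  have hsym : ∀ x y : V, (inner ℂ (P x) y : ℂ) = inner ℂ x (P y) := by
    have := (LinearMap.isSymmetric_iff_inner_map_self_real (P : V →ₗ[ℂ] V)).mpr
      (fun v => hreal v)
    exact fun x y => this x y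
  have key : ∀ v w : V, ((inner ℂ v (P w) : ℂ).re) ^ 2
      ≤ ((inner ℂ v (P v) : ℂ).re) * ((inner ℂ w (P w) : ℂ).re) := by
    intro v w
    have hd : discrim ((inner ℂ v (P v) : ℂ).re) (2 * (inner ℂ v (P w) : ℂ).re)
        ((inner ℂ w (P w) : ℂ).re) ≤ 0 := by
      apply discrim_le_zero
      intro t
      have expand : (inner ℂ ((t:ℂ) • v + w) (P ((t:ℂ) • v + w)) : ℂ)
          = ((t^2 : ℝ):ℂ) * inner ℂ v (P v) + (t:ℂ) * inner ℂ v (P w)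
            + (t:ℂ) * inner ℂ w (P v) + inner ℂ w (P w) := by
        rw [map_add, map_smul]
        simp only [inner_add_left, inner_add_right, inner_smul_left, inner_smul_right,
          ContinuousLinearMap.add_apply, Complex.conj_ofReal]
        push_cast
        ring
      have h0 := (Complex.nonneg_iff.mp (hq ((t:ℂ) • v + w))).1
      rw [expand] at h0
      have him : (inner ℂ w (P v) : ℂ).re = (inner ℂ v (P w) : ℂ).re := by
        have : (inner ℂ w (P v) : ℂ) = (starRingEnd ℂ) (inner ℂ v (P w) : ℂ) := by
          rw [← hsym v w, ← inner_conj_symm]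
        rw [this, Complex.conj_re]
      simp only [Complex.add_re, Complex.mul_re, Complex.ofReal_re, Complex.ofReal_im,
        zero_mul, sub_zero] at h0
      rw [him] at h0
      linarith [h0, pow_two t]
    rw [discrim] at hd
    nlinarith [hd]
  refine P.opNorm_le_bound hM (fun v => ?_)
  rcases eq_or_lt_of_le (norm_nonneg (P v)) with h0 | h0
  · rw [← h0]; positivity
  · have h1 : ‖P v‖ ^ 2 = (inner ℂ (P v) (P v) : ℂ).re := by
      rw [← inner_self_eq_norm_sq (𝕜 := ℂ)]; rfl
    have h1' : ‖P v‖ ^ 2 = (inner ℂ v (P (P v)) : ℂ).re := by rw [h1, hsym]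
    have h2 := key v (P v)
    rw [← h1'] at h2
    have h3 : (‖P v‖ ^ 2) ^ 2 ≤ (M * ‖v‖ ^ 2) * (M * ‖P v‖ ^ 2) :=
      le_trans h2 (mul_le_mul (hb v) (hb (P v))
        (Complex.nonneg_iff.mp (hq (P v))).1 (by positivity))
    have h4 : ‖P v‖ ^ 2 ≤ (M * ‖v‖) ^ 2 := by
      have hp : (0:ℝ) < ‖P v‖ ^ 2 := by positivity
      rw [← mul_le_mul_iff_of_pos_right hp]
      calc ‖P v‖ ^ 2 * ‖P v‖ ^ 2 = (‖P v‖ ^ 2) ^ 2 := by ring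
        _ ≤ (M * ‖v‖ ^ 2) * (M * ‖P v‖ ^ 2) := h3
        _ = (M * ‖v‖) ^ 2 * ‖P v‖ ^ 2 := by ring
    calc ‖P v‖ = √(‖P v‖ ^ 2) := by rw [Real.sqrt_sq (norm_nonneg _)]
      _ ≤ √((M * ‖v‖) ^ 2) := Real.sqrt_le_sqrt h4
      _ = M * ‖v‖ := Real.sqrt_sq (by positivity)

/-- Lagrange interpolation weights picking out the degree-`d` coefficient at
nodes `2⁻¹ ^ n`. -/
lemma lagrange_weights (d : ℕ) :
    ∃ lam : Fin (d+1) → ℝ,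
      ∀ n : ℕ, n ≤ d →
        ∑ i : Fin (d+1), lam i * (((2:ℝ)⁻¹) ^ n) ^ (i:ℕ) = if n = d then 1 else 0 := by
  set q : ℝ := (2:ℝ)⁻¹ with hq
  have hq0 : 0 < q := by norm_num [hq]
  have hq1 : q < 1 := by norm_num [hq]
  have hmono : StrictAnti (fun n : ℕ => q ^ n) :=
    fun m n h => (pow_lt_pow_iff_right_of_lt_one₀ hq0 hq1).2 h
  set nodes : Fin (d+1) → ℝ := fun i => q ^ (i:ℕ) with hnodes
  have hinj : Set.InjOn nodes (Finset.univ : Finset (Fin (d+1))) := by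
    intro i _ j _ h
    exact Fin.ext (hmono.injective h)
  set r : Fin (d+1) → ℝ := fun i => if (i:ℕ) = d then 1 else 0 with hr
  set P := Lagrange.interpolate Finset.univ nodes r with hP
  have hdeg : P.natDegree < d + 1 := by
    by_cases h : P = 0
    · rw [h]; simp
    · rw [Polynomial.natDegree_lt_iff_degree_lt h]
      simpa [hP] using Lagrange.degree_interpolate_lt (r := r) hinj
  refine ⟨fun i => P.coeff i, fun n hn => ?_⟩
  have heval : P.eval (q ^ n) = if n = d then 1 else 0 := by
    have h2 : P.eval (nodes ⟨n, by omega⟩) = r ⟨n, by omega⟩ :=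
      Lagrange.eval_interpolate_at_node (r := r) hinj (Finset.mem_univ _)
    simpa only [hnodes, hr, Fin.val_mk] using h2
  rw [← heval, Polynomial.eval_eq_sum_range' hdeg]
  rw [← Fin.sum_univ_eq_sum_range (fun i => P.coeff i * (q ^ n) ^ i)]

/-- Exchange a triple sum. -/
lemma sum_sum_sum_comm {ι κ μ M : Type*} [AddCommMonoid M]
    (s : Finset ι) (t : Finset κ) (u : Finset μ) (f : ι → κ → μ → M) :
    ∑ i ∈ s, ∑ j ∈ t, ∑ n ∈ u, f i j n = ∑ n ∈ u, ∑ i ∈ s, ∑ j ∈ t, f i j n :=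
  calc ∑ i ∈ s, ∑ j ∈ t, ∑ n ∈ u, f i j n
      = ∑ i ∈ s, ∑ n ∈ u, ∑ j ∈ t, f i j n :=
        Finset.sum_congr rfl fun i _ => Finset.sum_comm
    _ = ∑ n ∈ u, ∑ i ∈ s, ∑ j ∈ t, f i j n := Finset.sum_comm

/-- Positive definiteness gives nonnegativity of the quadratic form over any
finite index type. -/
lemma isPosDefOn_fintype_sum {S : Type u} [Monoid S] [StarMul S] {T : Set S}
    {V : Type v} [NormedAddCommGroup V] [InnerProductSpace ℂ V]
    {ψ : S → (V →L[ℂ] V)} (h : IsPosDefOn T ψ)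
    {ι : Type*} [Fintype ι] (s : ι → S) (hs : ∀ j, s j ∈ T) (v : ι → V) :
    0 ≤ ∑ j, ∑ k, (inner ℂ (v j) (ψ (star (s j) * s k) (v k)) : ℂ) := by
  classical
  set G : ι → ι → ℂ := fun j k => (inner ℂ (v j) (ψ (star (s j) * s k) (v k)) : ℂ) with hG
  let e := Fintype.equivFin ι
  have h0 := h (Fintype.card ι) (s ∘ e.symm) (fun j => hs _) (v ∘ e.symm)
  have h2 : ∑ j : Fin (Fintype.card ι), ∑ k : Fin (Fintype.card ι), G (e.symm j) (e.symm k)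
      = ∑ j : ι, ∑ k : ι, G j k := by
    rw [Equiv.sum_comp e.symm (fun j => ∑ k : Fin (Fintype.card ι), G j (e.symm k))]
    exact Finset.sum_congr rfl fun j _ => Equiv.sum_comp e.symm (G j)
  rw [← h2]
  exact h0

end Helpers

theorem series_positive_definite_iff_terms_positive_definite
    {S : Type u} [Monoid S] [StarMul S]
    -- γ is a structure homomorphism on S:
    (γ : ℝ → S)
    (hγ_mul : ∀ r s : ℝ, 0 < r → r ≤ 1 → 0 < s → s ≤ 1 → γ (r * s) = γ r * γ s)
    (hγ_one : γ 1 = 1)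
    (hγ_star : ∀ r : ℝ, 0 < r → r ≤ 1 → star (γ r) = γ r)
    (hγ_central : ∀ r : ℝ, 0 < r → r ≤ 1 → ∀ x : S, γ r * x = x * γ r)
    -- T is a *-subsemigroup with γ(r)T ⊆ T for 0 < r < 1:
    (T : Set S)
    (hT_mul : ∀ x ∈ T, ∀ y ∈ T, x * y ∈ T)
    (hT_star : ∀ x ∈ T, star x ∈ T)
    (hT_γ : ∀ r : ℝ, 0 < r → r < 1 → ∀ x ∈ T, γ r * x ∈ T)
    {V : Type v} [NormedAddCommGroup V] [InnerProductSpace ℂ V] [CompleteSpace V]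
    (φn : ℕ → S → (V →L[ℂ] V)) (φ : S → (V →L[ℂ] V)) (M : ℝ)
    -- each φₙ is homogeneous of degree n on T:
    (hhom : ∀ (n : ℕ) (r : ℝ), 0 < r → r < 1 → ∀ a ∈ T,
      φn n (γ r * a) = ((r ^ n : ℝ) : ℂ) • φn n a)
    -- for a ∈ T, the series ∑ₙ φₙ(a) converges to φ(a) in the weak operator topology:
    (hconv : ∀ a ∈ T, ∀ v w : V,
      Filter.Tendsto
        (fun N : ℕ => ∑ n ∈ Finset.range N, (inner ℂ w (φn n a v) : ℂ))
        Filter.atTop (nhds (inner ℂ w (φ a v) : ℂ)))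
    -- M bounds ‖φ(aa*)‖ on T:
    (hM : ∀ a ∈ T, ‖φ (a * star a)‖ ≤ M) :
    (IsPosDefOn T φ ↔ ∀ n : ℕ, IsPosDefOn T (φn n)) ∧
    (IsPosDefOn T φ → ∀ (n : ℕ), ∀ a ∈ T, ‖φn n (a * star a)‖ ≤ M) := by
  classical
  -- the key algebraic identity
  have halg : ∀ (x y : ℝ), 0 < x → x < 1 → 0 < y → y < 1 → ∀ (p r : S),
      star (γ x * p) * (γ y * r) = γ (x*y) * (star p * r) := by
    intro x y hx hx1 hy hy1 p r
    have hxy0 : 0 < x * y := mul_pos hx hy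
    have hxy1 : x * y ≤ 1 := by nlinarith
    rw [star_mul, hγ_star x hx hx1.le, mul_assoc, ← mul_assoc (γ x),
      ← hγ_mul x y hx hx1.le hy hy1.le, ← mul_assoc,
      ← hγ_central (x*y) hxy0 hxy1 (star p), mul_assoc]
  -- HARD DIRECTION
  have keyHard : IsPosDefOn T φ → ∀ n, IsPosDefOn T (φn n) := by
    intro hφ d m s hs v
    have haT : ∀ j k, star (s j) * s k ∈ T :=
      fun j k => hT_mul _ (hT_star _ (hs j)) _ (hs k)
    set c : ℕ → ℂ :=
      fun n => ∑ j, ∑ k, (inner ℂ (v j) (φn n (star (s j) * s k) (v k)) : ℂ) with hc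
    -- Step A : weighted series converges
    have hB : ∀ t : ℝ, 0 < t → t < 1 →
        Filter.Tendsto (fun N => ∑ n ∈ Finset.range N, ((t ^ n : ℝ) : ℂ) * c n)
          Filter.atTop
          (nhds (∑ j, ∑ k, (inner ℂ (v j) (φ (γ t * (star (s j) * s k)) (v k)) : ℂ))) := by
      intro t ht ht1
      have h1 : ∀ j k : Fin m,
          Filter.Tendsto (fun N => ∑ n ∈ Finset.range N,
              ((t ^ n : ℝ) : ℂ) * (inner ℂ (v j) (φn n (star (s j) * s k) (v k)) : ℂ))
            Filter.atTop
            (nhds (inner ℂ (v j) (φ (γ t * (star (s j) * s k)) (v k)) : ℂ)) := by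
        intro j k
        have h2 := hconv (γ t * (star (s j) * s k)) (hT_γ t ht ht1 _ (haT j k)) (v k) (v j)
        have h3 : (fun N => ∑ n ∈ Finset.range N,
              (inner ℂ (v j) (φn n (γ t * (star (s j) * s k)) (v k)) : ℂ))
            = fun N => ∑ n ∈ Finset.range N,
              ((t ^ n : ℝ) : ℂ) * (inner ℂ (v j) (φn n (star (s j) * s k) (v k)) : ℂ) := by
          funext N
          refine Finset.sum_congr rfl fun n _ => ?_
          rw [hhom n t ht ht1 _ (haT j k), ContinuousLinearMap.smul_apply, inner_smul_right]
        rw [h3] at h2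
        exact h2
      have h3 := tendsto_finset_sum (Finset.univ : Finset (Fin m))
        (fun j _ => tendsto_finset_sum (Finset.univ : Finset (Fin m)) (fun k _ => h1 j k))
      have heq : (fun N => ∑ n ∈ Finset.range N, ((t ^ n : ℝ) : ℂ) * c n)
          = fun N => ∑ j, ∑ k, ∑ n ∈ Finset.range N,
              ((t ^ n : ℝ) : ℂ) * (inner ℂ (v j) (φn n (star (s j) * s k) (v k)) : ℂ) := by
        funext N
        rw [sum_sum_sum_comm]
        simp only [hc, Finset.mul_sum]
      rw [heq]
      exact h3
    -- Step B : growth bound on c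
    obtain ⟨C, hC0, hC⟩ : ∃ C : ℝ, 0 ≤ C ∧ ∀ n : ℕ, ‖c n‖ ≤ C * 2 ^ n := by
      have h2 := hB (2⁻¹ : ℝ) (by norm_num) (by norm_num)
      have h3 : Filter.Tendsto
          (fun N => (∑ n ∈ Finset.range (N+1), (((2:ℝ)⁻¹ ^ n : ℝ) : ℂ) * c n)
            - ∑ n ∈ Finset.range N, (((2:ℝ)⁻¹ ^ n : ℝ) : ℂ) * c n)
          Filter.atTop (nhds 0) := by
        have := (h2.comp (Filter.tendsto_add_atTop_nat 1)).sub h2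
        simpa using this
      have h4 : Filter.Tendsto (fun N => ‖(((2:ℝ)⁻¹ ^ N : ℝ) : ℂ) * c N‖)
          Filter.atTop (nhds 0) := by
        have h5 : (fun N => (∑ n ∈ Finset.range (N+1), (((2:ℝ)⁻¹ ^ n : ℝ) : ℂ) * c n)
              - ∑ n ∈ Finset.range N, (((2:ℝ)⁻¹ ^ n : ℝ) : ℂ) * c n)
            = fun N => (((2:ℝ)⁻¹ ^ N : ℝ) : ℂ) * c N := by
          funext N
          rw [Finset.sum_range_succ]
          ring
        rw [h5] at h3
        simpa using h3.norm
      obtain ⟨C, hC⟩ := h4.bddAbove_range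
      rw [upperBounds] at hC
      have hCmem : ∀ N : ℕ, ‖(((2:ℝ)⁻¹ ^ N : ℝ) : ℂ) * c N‖ ≤ C :=
        fun N => hC (Set.mem_range_self N)
      have hC0 : 0 ≤ C := le_trans (norm_nonneg _) (hCmem 0)
      refine ⟨C, hC0, fun n => ?_⟩
      have h6 := hCmem n
      rw [norm_mul, Complex.norm_real, Real.norm_eq_abs,
        abs_of_nonneg (by positivity : (0:ℝ) ≤ (2:ℝ)⁻¹ ^ n)] at h6
      have h7 : (2:ℝ)⁻¹ ^ n * 2 ^ n = 1 := by
        rw [← mul_pow]; norm_num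
      calc ‖c n‖ = ((2:ℝ)⁻¹ ^ n * ‖c n‖) * 2 ^ n := by
            rw [mul_comm ((2:ℝ)⁻¹ ^ n) _, mul_assoc, h7, mul_one]
        _ ≤ C * 2 ^ n := mul_le_mul_of_nonneg_right h6 (by positivity)
    -- Step C : positivity of the doubly-weighted forms
    have hpos : ∀ (x lam : Fin (d+1) → ℝ), (∀ i, 0 < x i) → (∀ i, x i < 1) →
        0 ≤ ∑ i : Fin (d+1), ∑ i' : Fin (d+1), ((lam i * lam i' : ℝ) : ℂ) *
            ∑ j, ∑ k, (inner ℂ (v j) (φ (γ (x i * x i') * (star (s j) * s k)) (v k)) : ℂ) := by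
      intro x lam hx0 hx1
      have h0 := isPosDefOn_fintype_sum hφ
        (fun z : Fin (d+1) × Fin m => γ (x z.1) * s z.2)
        (fun z => hT_γ _ (hx0 z.1) (hx1 z.1) _ (hs z.2))
        (fun z => ((lam z.1 : ℝ) : ℂ) • v z.2)
      have hAB : (∑ z : Fin (d+1) × Fin m, ∑ w : Fin (d+1) × Fin m,
            (inner ℂ (((lam z.1 : ℝ) : ℂ) • v z.2)
              (φ (star (γ (x z.1) * s z.2) * (γ (x w.1) * s w.2))
                (((lam w.1 : ℝ) : ℂ) • v w.2)) : ℂ))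
          = ∑ i : Fin (d+1), ∑ i' : Fin (d+1), ((lam i * lam i' : ℝ) : ℂ) *
              ∑ j, ∑ k, (inner ℂ (v j) (φ (γ (x i * x i') * (star (s j) * s k)) (v k)) : ℂ) := by
        simp only [Fintype.sum_prod_type]
        refine Finset.sum_congr rfl fun i _ => ?_
        rw [Finset.sum_comm]
        refine Finset.sum_congr rfl fun i' _ => ?_
        rw [Finset.mul_sum]
        refine Finset.sum_congr rfl fun j _ => ?_
        rw [Finset.mul_sum]
        refine Finset.sum_congr rfl fun k _ => ?_
        rw [halg (x i) (x i') (hx0 i) (hx1 i) (hx0 i') (hx1 i') (s j) (s k)]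
        rw [inner_smul_left, map_smul, inner_smul_right, Complex.conj_ofReal]
        push_cast
        ring
      rw [← hAB]
      exact h0
    -- Step D : Lagrange weights and the final limit argument
    obtain ⟨lam, hlag⟩ := lagrange_weights d
    set q : ℝ := (2:ℝ)⁻¹ with hqdef
    have hq0 : 0 < q := by norm_num [hqdef]
    have hq1 : q < 1 := by norm_num [hqdef]
    set B : ℝ := ∑ i : Fin (d+1), |lam i| with hBdef
    have hB0 : 0 ≤ B := Finset.sum_nonneg fun i _ => abs_nonneg _
    set K : ℝ := 2^(d+2) * B^2 * C with hKdef
    have hK0 : 0 ≤ K := by positivity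
    -- the per-ε estimate
    have hclose : ∀ ε : ℝ, 0 < ε → ε ≤ 2⁻¹ →
        ∃ L : ℂ, 0 ≤ L ∧ ‖L - ((ε^(2*d) : ℝ) : ℂ) * c d‖ ≤ K * ε^(2*d+2) := by
      intro ε hε0 hε
      have hε1 : ε < 1 := lt_of_le_of_lt hε (by norm_num)
      set xf : Fin (d+1) → ℝ := fun i => ε * q ^ (i:ℕ) with hxf
      have hx0 : ∀ i, 0 < xf i := fun i => by positivity
      have hx1 : ∀ i, xf i < 1 := by
        intro i
        calc xf i ≤ ε * 1 :=
              mul_le_mul_of_nonneg_left (pow_le_one₀ hq0.le hq1.le) hε0.le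
          _ < 1 := by rw [mul_one]; exact hε1
      set α : ℕ → ℝ := fun n => ∑ i, lam i * xf i ^ n with hα
      have hαE : ∀ n : ℕ, α n = ε^n * ∑ i : Fin (d+1), lam i * (q^n) ^ (i:ℕ) := by
        intro n
        rw [hα, Finset.mul_sum]
        refine Finset.sum_congr rfl fun i _ => ?_
        simp only [hxf]
        rw [mul_pow, ← pow_right_comm]
        ring
      have hα_lt : ∀ n : ℕ, n < d → α n = 0 := by
        intro n hn
        rw [hαE n, hlag n hn.le, if_neg hn.ne, mul_zero]
      have hα_d : α d = ε^d := by
        rw [hαE d, hlag d le_rfl, if_pos rfl, mul_one]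
      have hα_bound : ∀ n : ℕ, |α n| ≤ ε^n * B := by
        intro n
        rw [hαE n, abs_mul, abs_of_nonneg (by positivity : (0:ℝ) ≤ ε^n)]
        apply mul_le_mul_of_nonneg_left _ (by positivity : (0:ℝ) ≤ ε^n)
        calc |∑ i : Fin (d+1), lam i * (q^n) ^ (i:ℕ)|
            ≤ ∑ i : Fin (d+1), |lam i * (q^n) ^ (i:ℕ)| := Finset.abs_sum_le_sum_abs _ _
          _ ≤ ∑ i : Fin (d+1), |lam i| := by
              apply Finset.sum_le_sum
              intro i _
              rw [abs_mul]
              calc |lam i| * |(q^n) ^ (i:ℕ)| ≤ |lam i| * 1 := by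
                    apply mul_le_mul_of_nonneg_left _ (abs_nonneg _)
                    rw [abs_of_nonneg (by positivity : (0:ℝ) ≤ (q^n) ^ (i:ℕ))]
                    exact pow_le_one₀ (by positivity) (pow_le_one₀ hq0.le hq1.le)
                _ = |lam i| := mul_one _
          _ = B := hBdef.symm
      set L : ℂ := ∑ i : Fin (d+1), ∑ i' : Fin (d+1), ((lam i * lam i' : ℝ) : ℂ) *
          ∑ j, ∑ k, (inner ℂ (v j) (φ (γ (xf i * xf i') * (star (s j) * s k)) (v k)) : ℂ)
        with hLdef
      have hLpos : 0 ≤ L := hpos xf lam hx0 hx1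
      have htend : Filter.Tendsto
          (fun N => ∑ n ∈ Finset.range N, ((α n ^ 2 : ℝ) : ℂ) * c n)
          Filter.atTop (nhds L) := by
        have h1 : ∀ i i' : Fin (d+1),
            Filter.Tendsto (fun N => ((lam i * lam i' : ℝ) : ℂ) *
                ∑ n ∈ Finset.range N, (((xf i * xf i')^n : ℝ) : ℂ) * c n)
              Filter.atTop
              (nhds (((lam i * lam i' : ℝ) : ℂ) *
                ∑ j, ∑ k, (inner ℂ (v j) (φ (γ (xf i * xf i') * (star (s j) * s k)) (v k)) : ℂ))) := by
          intro i i'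
          have hlt : xf i * xf i' < 1 := by nlinarith [hx0 i, hx1 i, hx0 i', hx1 i']
          exact (hB (xf i * xf i') (by positivity) hlt).const_mul _
        have h3 := tendsto_finset_sum (Finset.univ : Finset (Fin (d+1)))
          (fun i _ => tendsto_finset_sum (Finset.univ : Finset (Fin (d+1)))
            (fun i' _ => h1 i i'))
        have hα2 : ∀ n : ℕ, (α n)^2
            = ∑ i : Fin (d+1), ∑ i' : Fin (d+1), (lam i * lam i') * (xf i * xf i')^n := by
          intro n
          simp only [hα]
          rw [pow_two, Finset.sum_mul_sum]
          refine Finset.sum_congr rfl fun i _ => Finset.sum_congr rfl fun i' _ => ?_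
          rw [mul_pow]
          ring
        have heq : (fun N => ∑ i : Fin (d+1), ∑ i' : Fin (d+1), ((lam i * lam i' : ℝ) : ℂ) *
              ∑ n ∈ Finset.range N, (((xf i * xf i')^n : ℝ) : ℂ) * c n)
            = fun N => ∑ n ∈ Finset.range N, ((α n ^ 2 : ℝ) : ℂ) * c n := by
          funext N
          simp only [Finset.mul_sum]
          rw [sum_sum_sum_comm]
          refine Finset.sum_congr rfl fun n _ => ?_
          calc ∑ i : Fin (d+1), ∑ i' : Fin (d+1),
                ((lam i * lam i' : ℝ) : ℂ) * ((((xf i * xf i')^n : ℝ) : ℂ) * c n)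
              = ∑ i : Fin (d+1), ∑ i' : Fin (d+1),
                (((lam i * lam i') * (xf i * xf i')^n : ℝ) : ℂ) * c n := by
                refine Finset.sum_congr rfl fun i _ => Finset.sum_congr rfl fun i' _ => ?_
                push_cast
                ring
            _ = (∑ i : Fin (d+1), ∑ i' : Fin (d+1),
                (((lam i * lam i') * (xf i * xf i')^n : ℝ) : ℂ)) * c n := by
                rw [Finset.sum_mul]
                refine Finset.sum_congr rfl fun i _ => ?_
                rw [Finset.sum_mul]
            _ = ((α n ^ 2 : ℝ) : ℂ) * c n := by
                congr 1
                rw [hα2 n]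
                push_cast
                rfl
        rw [← heq]
        exact h3
      refine ⟨L, hLpos, ?_⟩
      have hSd : ∑ n ∈ Finset.range (d+1), ((α n ^ 2 : ℝ) : ℂ) * c n
          = ((ε^(2*d) : ℝ) : ℂ) * c d := by
        rw [Finset.sum_range_succ]
        have hzero : ∑ n ∈ Finset.range d, ((α n ^ 2 : ℝ) : ℂ) * c n = 0 := by
          apply Finset.sum_eq_zero
          intro n hn
          rw [hα_lt n (Finset.mem_range.mp hn)]
          norm_num
        rw [hzero, zero_add, hα_d, ← pow_mul, mul_comm d 2]
      have htail : ∀ N, d+1 ≤ N →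
          ‖(∑ n ∈ Finset.range N, ((α n ^ 2 : ℝ) : ℂ) * c n) - ((ε^(2*d):ℝ):ℂ) * c d‖
            ≤ K * ε^(2*d+2) := by
        intro N hN
        rw [← hSd, ← Finset.sum_Ico_eq_sub _ hN]
        have hr0 : (0:ℝ) ≤ 2*ε^2 := by positivity
        have hrhalf : 2*ε^2 ≤ 2⁻¹ := by nlinarith
        have hr1 : 2*ε^2 < 1 := lt_of_le_of_lt hrhalf (by norm_num)
        calc ‖∑ n ∈ Finset.Ico (d+1) N, ((α n ^ 2:ℝ):ℂ) * c n‖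
            ≤ ∑ n ∈ Finset.Ico (d+1) N, ‖((α n ^ 2:ℝ):ℂ) * c n‖ := norm_sum_le _ _
          _ ≤ ∑ n ∈ Finset.Ico (d+1) N, (B^2 * C) * (2*ε^2)^n := by
              apply Finset.sum_le_sum
              intro n _
              rw [norm_mul, Complex.norm_real, Real.norm_eq_abs, abs_of_nonneg (sq_nonneg _)]
              have h8 : α n ^ 2 ≤ (ε^n * B)^2 := by
                nlinarith [hα_bound n, abs_nonneg (α n), sq_abs (α n)]
              have h9 : (2*ε^2)^n = 2^n * (ε^n)^2 := by
                rw [mul_pow, pow_right_comm]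
              calc α n ^ 2 * ‖c n‖ ≤ (ε^n*B)^2 * (C * 2^n) :=
                    mul_le_mul h8 (hC n) (norm_nonneg _) (by positivity)
                _ = (B^2*C) * (2*ε^2)^n := by rw [h9]; ring
          _ = (B^2 * C) * ∑ n ∈ Finset.Ico (d+1) N, (2*ε^2)^n := by
              rw [Finset.mul_sum]
          _ ≤ (B^2 * C) * ((2*ε^2)^(d+1) * 2) := by
              apply mul_le_mul_of_nonneg_left _ (by positivity)
              rw [Finset.sum_Ico_eq_sum_range]
              have hgeom : ∑ i ∈ Finset.range (N - (d+1)), (2*ε^2)^(d+1+i)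
                  = (2*ε^2)^(d+1) * ∑ i ∈ Finset.range (N - (d+1)), (2*ε^2)^i := by
                rw [Finset.mul_sum]
                exact Finset.sum_congr rfl fun i _ => by rw [pow_add]
              rw [hgeom]
              apply mul_le_mul_of_nonneg_left _ (by positivity)
              calc ∑ i ∈ Finset.range (N - (d+1)), (2*ε^2)^i
                  ≤ ∑' i : ℕ, (2*ε^2)^i :=
                    Summable.sum_le_tsum _ (fun i _ => by positivity)
                      (summable_geometric_of_lt_one hr0 hr1)
                _ = (1 - 2*ε^2)⁻¹ := tsum_geometric_of_lt_one hr0 hr1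
                _ ≤ 2 := by
                    rw [inv_le_comm₀ (by linarith) (by norm_num)]
                    linarith
          _ = K * ε^(2*d+2) := by
              rw [hKdef]
              rw [mul_pow, ← pow_mul]
              ring
      have h10 := ((htend.sub_const (((ε^(2*d):ℝ):ℂ) * c d)).norm)
      refine le_of_tendsto h10 ?_
      filter_upwards [Filter.eventually_ge_atTop (d+1)] with N hN
      exact htail N hN
    -- conclude 0 ≤ c d
    have hεs0 : ∀ k : ℕ, (0:ℝ) < 2⁻¹ * ((k:ℝ)+1)⁻¹ := fun k => by positivity
    have hεs2 : ∀ k : ℕ, (2:ℝ)⁻¹ * ((k:ℝ)+1)⁻¹ ≤ 2⁻¹ := by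
      intro k
      calc (2:ℝ)⁻¹ * ((k:ℝ)+1)⁻¹ ≤ 2⁻¹ * 1 := by
            apply mul_le_mul_of_nonneg_left _ (by norm_num)
            rw [inv_le_one_iff₀]
            right
            push_cast
            linarith [Nat.cast_nonneg (α := ℝ) k]
        _ = 2⁻¹ := mul_one _
    choose Ls hLs0 hLs using fun k : ℕ =>
      hclose (2⁻¹ * ((k:ℝ)+1)⁻¹) (hεs0 k) (hεs2 k)
    set εs : ℕ → ℝ := fun k => 2⁻¹ * ((k:ℝ)+1)⁻¹ with hεsdef
    set z : ℕ → ℂ := fun k => ((((εs k)^(2*d) : ℝ)⁻¹ : ℝ) : ℂ) * Ls k with hz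
    have hz0 : ∀ k, 0 ≤ z k := by
      intro k
      apply mul_nonneg _ (hLs0 k)
      rw [Complex.zero_le_real]
      positivity
    have hzb : ∀ k, ‖z k - c d‖ ≤ K * ((k:ℝ)+1)⁻¹ := by
      intro k
      have hεpos : (0:ℝ) < εs k := hεs0 k
      have hne : ((εs k)^(2*d) : ℝ) ≠ 0 := by positivity
      have h9 : z k - c d
          = ((((εs k)^(2*d):ℝ)⁻¹ : ℝ) : ℂ) * (Ls k - (((εs k)^(2*d):ℝ):ℂ) * c d) := by
        rw [hz]
        simp only
        rw [mul_sub, ← mul_assoc, ← Complex.ofReal_mul, inv_mul_cancel₀ hne]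
        simp
      rw [h9, norm_mul, Complex.norm_real, Real.norm_eq_abs,
        abs_of_nonneg (by positivity : (0:ℝ) ≤ ((εs k)^(2*d))⁻¹)]
      calc ((εs k)^(2*d))⁻¹ * ‖Ls k - (((εs k)^(2*d):ℝ):ℂ) * c d‖
          ≤ ((εs k)^(2*d))⁻¹ * (K * (εs k)^(2*d+2)) :=
            mul_le_mul_of_nonneg_left (hLs k) (by positivity)
        _ = K * (εs k)^2 := by
            rw [pow_add]
            field_simp
        _ ≤ K * ((k:ℝ)+1)⁻¹ := by
            apply mul_le_mul_of_nonneg_left _ hK0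
            have h11 : εs k ≤ ((k:ℝ)+1)⁻¹ := by
              rw [hεsdef]
              simp only
              nlinarith [hεpos, inv_pos.mpr (show (0:ℝ) < (k:ℝ)+1 by positivity)]
            have h12 : εs k ≤ 1 := le_trans (hεs2 k) (by norm_num)
            nlinarith [hεpos]
    have hztend : Filter.Tendsto z Filter.atTop (nhds (c d)) := by
      rw [tendsto_iff_norm_sub_tendsto_zero]
      apply squeeze_zero (fun k => norm_nonneg _) hzb
      have := tendsto_one_div_add_atTop_nhds_zero_nat.const_mul K
      simpa [one_div, mul_comm] using this
    exact nonneg_lim_of_nonneg hztend (Filter.Eventually.of_forall hz0)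
  -- EASY DIRECTION
  have keyEasy : (∀ n, IsPosDefOn T (φn n)) → IsPosDefOn T φ := by
    intro hall m s hs v
    have haT : ∀ j k, star (s j) * s k ∈ T :=
      fun j k => hT_mul _ (hT_star _ (hs j)) _ (hs k)
    have htend := tendsto_finset_sum (Finset.univ : Finset (Fin m))
      (fun j _ => tendsto_finset_sum (Finset.univ : Finset (Fin m))
        (fun k _ => hconv (star (s j) * s k) (haT j k) (v k) (v j)))
    apply nonneg_lim_of_nonneg htend
    apply Filter.Eventually.of_forall
    intro N
    rw [sum_sum_sum_comm]
    apply Finset.sum_nonneg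
    intro n _
    exact hall n m s hs v
  refine ⟨⟨keyHard, keyEasy⟩, ?_⟩
  -- NORM BOUND
  intro hφ n a ha
  have hall := keyHard hφ
  have hM0 : 0 ≤ M := le_trans (norm_nonneg _) (hM a ha)
  have haaT : a * star a ∈ T := hT_mul a ha (star a) (hT_star a ha)
  have hq : ∀ w : V, 0 ≤ (inner ℂ w (φn n (a * star a) w) : ℂ) := by
    intro w
    have h1 := hall n 1 (fun _ => star a) (fun _ => hT_star a ha) (fun _ => w)
    simpa [star_star] using h1
  have hqk : ∀ (k : ℕ) (w : V), 0 ≤ (inner ℂ w (φn k (a * star a) w) : ℂ) := by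
    intro k w
    have h1 := hall k 1 (fun _ => star a) (fun _ => hT_star a ha) (fun _ => w)
    simpa [star_star] using h1
  have hup : ∀ w : V, (inner ℂ w (φn n (a * star a) w) : ℂ).re ≤ M * ‖w‖ ^ 2 := by
    intro w
    have h1 : 0 ≤ (inner ℂ w (φ (a * star a) w) : ℂ) - inner ℂ w (φn n (a * star a) w) := by
      apply nonneg_lim_of_nonneg
        (f := fun N => (∑ k ∈ Finset.range N, (inner ℂ w (φn k (a * star a) w) : ℂ))
          - inner ℂ w (φn n (a * star a) w))
      · exact (hconv (a * star a) haaT w w).sub_const _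
      · filter_upwards [Filter.eventually_ge_atTop (n+1)] with N hN
        have h2 : (∑ k ∈ Finset.range N, (inner ℂ w (φn k (a * star a) w) : ℂ))
            - inner ℂ w (φn n (a * star a) w)
            = ∑ k ∈ (Finset.range N).erase n, (inner ℂ w (φn k (a * star a) w) : ℂ) := by
          have hmem : n ∈ Finset.range N := Finset.mem_range.mpr (by omega)
          rw [← Finset.add_sum_erase _ _ hmem]
          ring
        rw [h2]
        exact Finset.sum_nonneg fun k _ => hqk k w
    have h2 := (Complex.nonneg_iff.mp h1).1
    rw [Complex.sub_re] at h2
    have h3 : (inner ℂ w (φ (a * star a) w) : ℂ).re ≤ M * ‖w‖ ^ 2 := by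
      calc (inner ℂ w (φ (a * star a) w) : ℂ).re
          ≤ ‖(inner ℂ w (φ (a * star a) w) : ℂ)‖ := Complex.re_le_norm _
        _ ≤ ‖w‖ * ‖φ (a * star a) w‖ := norm_inner_le_norm _ _
        _ ≤ ‖w‖ * (‖φ (a * star a)‖ * ‖w‖) :=
            mul_le_mul_of_nonneg_left ((φ (a * star a)).le_opNorm w) (norm_nonneg _)
        _ ≤ ‖w‖ * (M * ‖w‖) := by
            apply mul_le_mul_of_nonneg_left _ (norm_nonneg _)
            exact mul_le_mul_of_nonneg_right (hM a ha) (norm_nonneg _)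
        _ = M * ‖w‖ ^ 2 := by ring
    linarith
  exact norm_le_of_posform hM0 hq hup
end
end
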